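/- arXiv:1409.7845 — 5 statements merged into one kernel-verified Lean document; each statement's English description precedes it below -/
import Mathlib

section
/- Let r, g_R be probability vectors on Fin d and s, g_S probability vectors on Fin d', with g_R and g_S strictly positive. Then there exists a column-stochastic matrix M on the index set Fin d × Fin d' with M (g_R ⊗ g_S) = g_R ⊗ g_S and M (r ⊗ g_S) = g_R ⊗ s if and only if the rescaled Lorenz curve of r ⊗ g_S relative to g_R ⊗ g_S lies nowhere below the rescaled Lorenz curve of g_R ⊗ s relative to g_R ⊗ g_S, i.e. L_{r⊗g_S | g_R⊗g_S}(x) ≥ L_{g_R⊗s | g_R⊗g_S}(x) for all x ∈ [0,1]. -/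
open Finset Real Filter

/-- A probability vector on a finite index set. -/
def IsProbVec {ι : Type*} [Fintype ι] (r : ι → ℝ) : Prop :=
  (∀ i, 0 ≤ r i) ∧ ∑ i, r i = 1

/-- A column-stochastic matrix: nonnegative entries, each column sums to 1. -/
def ColStochastic {ι κ : Type*} [Fintype ι] [Fintype κ] (M : Matrix κ ι ℝ) : Prop :=
  (∀ i j, 0 ≤ M i j) ∧ ∀ j, ∑ i, M i j = 1

/-- Tensor product of vectors. -/
def tens {ι κ : Type*} (r : ι → ℝ) (s : κ → ℝ) : ι × κ → ℝ := fun p => r p.1 * s p.2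

/-- n-fold tensor power of a vector on `Fin d`. -/
def tensPow {d : ℕ} (r : Fin d → ℝ) (n : ℕ) : (Fin n → Fin d) → ℝ :=
  fun f => ∏ k, r (f k)

/-- Relative entropy `D(r ‖ g)` (natural logarithm; `0 * log 0 = 0` holds by convention). -/
noncomputable def relEnt {ι : Type*} [Fintype ι] (r g : ι → ℝ) : ℝ :=
  ∑ i, r i * (Real.log (r i) - Real.log (g i))

/-- Optimal type-II error in hypothesis testing between `r` and `g`. -/
noncomputable def bEps {ι : Type*} [Fintype ι] (ε : ℝ) (r g : ι → ℝ) : ℝ :=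
  sInf {y | ∃ Q : ι → ℝ, (∀ i, 0 ≤ Q i ∧ Q i ≤ 1) ∧ 1 - ε ≤ ∑ i, Q i * r i ∧
    y = ∑ i, Q i * g i}

/-- Hypothesis-testing relative entropy. -/
noncomputable def DH {ι : Type*} [Fintype ι] (ε : ℝ) (r g : ι → ℝ) : ℝ :=
  - Real.log (bEps ε r g)

/-- Partial sums of `v` along the ordering `e`. -/
noncomputable def cumul {ι : Type*} [Fintype ι] (v : ι → ℝ)
    (e : Fin (Fintype.card ι) ≃ ι) (m : ℕ) : ℝ :=
  ∑ α ∈ Finset.univ.filter (fun α : Fin (Fintype.card ι) => (α : ℕ) < m), v (e α)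

/-- `L` is the rescaled Lorenz curve of `r` relative to `g`: indices are ordered so that the
ratios `r/g` are nonincreasing, and `L` linearly interpolates the cumulative points. -/
def IsLorenzCurveOf {ι : Type*} [Fintype ι] (r g : ι → ℝ) (L : ℝ → ℝ) : Prop :=
  ∃ e : Fin (Fintype.card ι) ≃ ι,
    (∀ a b : Fin (Fintype.card ι), a ≤ b → r (e b) / g (e b) ≤ r (e a) / g (e a)) ∧
    ∀ m : Fin (Fintype.card ι), ∀ x : ℝ,
      cumul g e (m : ℕ) ≤ x → x ≤ cumul g e ((m : ℕ) + 1) →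
      L x = cumul r e (m : ℕ) + (x - cumul g e (m : ℕ)) * (r (e m) / g (e m))

/-- Gibbs state of a two-level battery with gap `W` at inverse temperature `β`. -/
noncomputable def gibbsBit (β W : ℝ) : Fin 2 → ℝ :=
  fun k => (1 / (1 + Real.exp (-β * W))) * (if k = 0 then 1 else Real.exp (-β * W))

/-- Battery ground state `(1,0)`. -/
def groundBit : Fin 2 → ℝ := fun k => if k = 0 then 1 else 0

/-- Battery excited state `(0,1)`. -/
def excitedBit : Fin 2 → ℝ := fun k => if k = 0 then 0 else 1

/-- `W` units of work are ε-extractable from `r` relative to the equilibrium state `g`. -/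
def ExtractableWork {ι : Type*} [Fintype ι] (β : ℝ) (g r : ι → ℝ) (ε W : ℝ) : Prop :=
  0 ≤ W ∧ ∃ M : Matrix (ι × Fin 2) (ι × Fin 2) ℝ, ColStochastic M ∧
    M.mulVec (tens g (gibbsBit β W)) = tens g (gibbsBit β W) ∧
    (1/2) * ∑ k, |(∑ i, M.mulVec (tens r groundBit) (i, k)) - excitedBit k| ≤ ε

/-- One-shot ε-work yield. -/
noncomputable def Wgain {ι : Type*} [Fintype ι] (β : ℝ) (g r : ι → ℝ) (ε : ℝ) : ℝ :=
  sSup {W | ExtractableWork β g r ε W}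

/-- `W` units of work ε-suffice to create `r` relative to the equilibrium state `g`. -/
def FormationWork {ι : Type*} [Fintype ι] (β : ℝ) (g r : ι → ℝ) (ε W : ℝ) : Prop :=
  0 ≤ W ∧ ∃ M : Matrix (ι × Fin 2) (ι × Fin 2) ℝ, ∃ rt : ι → ℝ, ColStochastic M ∧
    M.mulVec (tens g (gibbsBit β W)) = tens g (gibbsBit β W) ∧
    IsProbVec rt ∧ (1/2) * ∑ i, |rt i - r i| ≤ ε ∧
    M.mulVec (tens g excitedBit) = tens rt groundBit

/-- One-shot ε-work cost. -/
noncomputable def Wcost {ι : Type*} [Fintype ι] (β : ℝ) (g r : ι → ℝ) (ε : ℝ) : ℝ :=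
  sInf {W | FormationWork β g r ε W}

/-!
Write `Φ_p(c) = ∑ᵢ (pᵢ - c gᵢ)⁺` (the hockey-stick functional). The Lorenz curve of `p` relative
to `g` is the lower envelope of the lines `x ↦ Φ_p(c) + c x`, and conversely `Φ_p(c)` is the
maximum of `L(x) - c x`; hence Lorenz domination is equivalent to `Φ_q ≤ Φ_p` for every `c`.

A column-stochastic `M` with `M g = g` and `M p = q` maps `p - c g` to `q - c g`, and the positive
part is subadditive, so `Φ_q ≤ Φ_p`. Conversely, lay the atoms of `g` on `[0, ∑ g]` in order of
decreasing `pᵢ / gᵢ`; then every subfamily of target atoms `(g_j, q_j)` lies below the Lorenz curve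
of `p`. By the intermediate value theorem some window `[u, u + g_j]` of this axis carries exactly
the value `q_j`; sending the window to `j` and cutting it out leaves a source whose Lorenz curve
still bounds the remaining targets. Induction over the targets yields a coupling, and dividing it
by `g` gives `M`.
-/

def cumMass (g : ℕ → ℝ) (k : ℕ) : ℝ := ∑ i ∈ range k, g i

/- Atom `i` of `g` occupies `[cumMass g i, cumMass g (i + 1)]` on the quantile axis and
`massBelow g x i` is the length of its part below `x`, so `quantileLorenz N g v x` integrates over
`[0, x]` the step density equal to `v i` on atom `i`. -/
def massBelow (g : ℕ → ℝ) (x : ℝ) (i : ℕ) : ℝ :=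
  min x (cumMass g (i + 1)) - min x (cumMass g i)

def quantileLorenz (N : ℕ) (g v : ℕ → ℝ) (x : ℝ) : ℝ :=
  ∑ i ∈ range N, v i * massBelow g x i

section QuantileLorenz

variable {N : ℕ} {g v : ℕ → ℝ}

@[simp] lemma cumMass_zero (g : ℕ → ℝ) : cumMass g 0 = 0 := by simp [cumMass]

lemma cumMass_succ (g : ℕ → ℝ) (k : ℕ) : cumMass g (k + 1) = cumMass g k + g k :=
  sum_range_succ _ _

lemma cumMass_mono (hg : ∀ i, 0 ≤ g i) : Monotone (cumMass g) :=
  monotone_nat_of_le_succ fun k => by rw [cumMass_succ]; linarith [hg k]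

lemma cumMass_nonneg (hg : ∀ i, 0 ≤ g i) (k : ℕ) : 0 ≤ cumMass g k := by
  simpa using cumMass_mono hg k.zero_le

lemma massBelow_mono (hg : ∀ i, 0 ≤ g i) (i : ℕ) : Monotone fun x => massBelow g x i := by
  intro x x' hx
  have := cumMass_mono hg i.le_succ
  simp only [massBelow, min_def]
  split_ifs <;> linarith

lemma massBelow_nonneg (hg : ∀ i, 0 ≤ g i) (x : ℝ) (i : ℕ) : 0 ≤ massBelow g x i := by
  have := cumMass_mono hg i.le_succ
  simp only [massBelow, min_def]
  split_ifs <;> linarith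

lemma massBelow_le (hg : ∀ i, 0 ≤ g i) (x : ℝ) (i : ℕ) : massBelow g x i ≤ g i := by
  have := hg i
  simp only [massBelow, cumMass_succ, min_def]
  split_ifs <;> linarith

lemma massBelow_of_cumMass_succ_le (hg : ∀ i, 0 ≤ g i) {x : ℝ} {i : ℕ}
    (hx : cumMass g (i + 1) ≤ x) : massBelow g x i = g i := by
  have := cumMass_mono hg i.le_succ
  rw [massBelow, min_eq_right hx, min_eq_right (by linarith), cumMass_succ]
  ring

lemma massBelow_of_le_cumMass (hg : ∀ i, 0 ≤ g i) {x : ℝ} {i : ℕ} (hx : x ≤ cumMass g i) :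
    massBelow g x i = 0 := by
  have := cumMass_mono hg i.le_succ
  rw [massBelow, min_eq_left hx, min_eq_left (by linarith), sub_self]

lemma sum_massBelow (g : ℕ → ℝ) (x : ℝ) (k : ℕ) :
    ∑ i ∈ range k, massBelow g x i = min x (cumMass g k) - min x 0 := by
  simp only [massBelow]
  rw [sum_range_sub (fun k => min x (cumMass g k)), cumMass_zero]

lemma sum_massBelow_of_mem_Icc (g : ℕ → ℝ) {x : ℝ} (hx : x ∈ Set.Icc 0 (cumMass g N)) :
    ∑ i ∈ range N, massBelow g x i = x := by
  rw [sum_massBelow, min_eq_left hx.2, min_eq_right hx.1, sub_zero]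

lemma quantileLorenz_sub_mul {x : ℝ} (hx : x ∈ Set.Icc 0 (cumMass g N)) (c : ℝ) :
    quantileLorenz N g v x - c * x = ∑ i ∈ range N, (v i - c) * massBelow g x i := by
  simp only [quantileLorenz, sub_mul, sum_sub_distrib, ← mul_sum, sum_massBelow_of_mem_Icc g hx]

lemma quantileLorenz_le_add (hg : ∀ i, 0 ≤ g i) {x : ℝ} (hx : x ∈ Set.Icc 0 (cumMass g N))
    (c : ℝ) : quantileLorenz N g v x ≤ ∑ i ∈ range N, g i * max (v i - c) 0 + c * x := by
  have hterm : ∀ i ∈ range N, (v i - c) * massBelow g x i ≤ g i * max (v i - c) 0 :=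
    fun i _ => calc
      (v i - c) * massBelow g x i ≤ max (v i - c) 0 * massBelow g x i :=
        mul_le_mul_of_nonneg_right (le_max_left _ _) (massBelow_nonneg hg x i)
      _ ≤ max (v i - c) 0 * g i :=
        mul_le_mul_of_nonneg_left (massBelow_le hg x i) (le_max_right _ _)
      _ = g i * max (v i - c) 0 := mul_comm _ _
  linarith [quantileLorenz_sub_mul (v := v) hx c, sum_le_sum hterm]

lemma exists_cumMass_segment (hN : 0 < N) {x : ℝ} (hx : x ∈ Set.Icc 0 (cumMass g N)) :
    ∃ m < N, cumMass g m ≤ x ∧ x ≤ cumMass g (m + 1) := by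
  classical
  have hN1 : N - 1 + 1 = N := by omega
  have hex : ∃ k, x ≤ cumMass g (k + 1) := ⟨N - 1, hN1 ▸ hx.2⟩
  refine ⟨Nat.find hex, ?_, ?_, Nat.find_spec hex⟩
  · have := Nat.find_min' hex (hN1 ▸ hx.2 : x ≤ cumMass g (N - 1 + 1))
    omega
  · rcases h : Nat.find hex with _ | k
    · simpa using hx.1
    · exact le_of_not_ge (Nat.find_min hex (h ▸ k.lt_succ_self))

lemma quantileLorenz_of_mem_segment (hg : ∀ i, 0 ≤ g i) {m : ℕ} (hm : m < N) {x : ℝ}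
    (h₁ : cumMass g m ≤ x) (h₂ : x ≤ cumMass g (m + 1)) :
    quantileLorenz N g v x = ∑ i ∈ range m, g i * v i + (x - cumMass g m) * v m := by
  have hbelow : ∀ i ∈ range m, v i * massBelow g x i = g i * v i := fun i hi => by
    rw [massBelow_of_cumMass_succ_le hg
      ((cumMass_mono hg (mem_range.1 hi)).trans h₁), mul_comm]
  have habove : ∀ i ∈ Ico (m + 1) N, v i * massBelow g x i = 0 := fun i hi => by
    rw [massBelow_of_le_cumMass hg (h₂.trans (cumMass_mono hg (mem_Ico.1 hi).1)), mul_zero]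
  rw [quantileLorenz, ← sum_range_add_sum_Ico _ hm, sum_range_succ, sum_congr rfl hbelow,
    sum_eq_zero habove, massBelow, min_eq_left h₂, min_eq_right h₁]
  ring

lemma exists_quantileLorenz_eq_add (hg : ∀ i, 0 ≤ g i) (hv : AntitoneOn v (Set.Iio N))
    {x : ℝ} (hx : x ∈ Set.Icc 0 (cumMass g N)) :
    ∃ c, quantileLorenz N g v x = ∑ i ∈ range N, g i * max (v i - c) 0 + c * x := by
  rcases N.eq_zero_or_pos with rfl | hN
  · refine ⟨0, ?_⟩
    simp [quantileLorenz, le_antisymm (by simpa using hx.2) hx.1]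
  obtain ⟨m, hm, h₁, h₂⟩ := exists_cumMass_segment hN hx
  refine ⟨v m, ?_⟩
  have hterm : ∀ i ∈ range N, (v i - v m) * massBelow g x i = g i * max (v i - v m) 0 := by
    intro i hi
    have hiN : i < N := mem_range.1 hi
    rcases lt_trichotomy i m with him | rfl | hmi
    · rw [massBelow_of_cumMass_succ_le hg ((cumMass_mono hg him).trans h₁),
        max_eq_left (sub_nonneg.2 (hv hiN hm him.le)), mul_comm]
    · simp
    · rw [massBelow_of_le_cumMass hg (h₂.trans (cumMass_mono hg hmi)),
        max_eq_right (sub_nonpos.2 (hv hm hiN hmi.le))]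
      ring
  linarith [quantileLorenz_sub_mul (v := v) hx (v m), sum_congr rfl hterm]

lemma exists_quantileLorenz_sub_mul_eq (hg : ∀ i, 0 ≤ g i) (hv : AntitoneOn v (Set.Iio N))
    (c : ℝ) : ∃ x ∈ Set.Icc 0 (cumMass g N),
      quantileLorenz N g v x - c * x = ∑ i ∈ range N, g i * max (v i - c) 0 := by
  classical
  have hex : ∃ k, N ≤ k ∨ v k ≤ c := ⟨N, Or.inl le_rfl⟩
  set k := Nat.find hex
  have hkN : k ≤ N := Nat.find_min' hex (Or.inl le_rfl)
  have hx : cumMass g k ∈ Set.Icc 0 (cumMass g N) :=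
    ⟨cumMass_nonneg hg k, cumMass_mono hg hkN⟩
  refine ⟨cumMass g k, hx, ?_⟩
  rw [quantileLorenz_sub_mul hx]
  refine sum_congr rfl fun i hi => ?_
  have hiN : i < N := mem_range.1 hi
  rcases lt_or_ge i k with hik | hki
  · have hci : c < v i := not_le.1 (not_or.1 (Nat.find_min hex hik)).2
    rw [massBelow_of_cumMass_succ_le hg (cumMass_mono hg hik), max_eq_left (by linarith),
      mul_comm]
  · have hvk : v i ≤ c := by
      rcases Nat.find_spec hex with h | h
      · omega
      · exact (hv (show k < N by omega) hiN hki).trans h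
    rw [massBelow_of_le_cumMass hg (cumMass_mono hg hki), max_eq_right (by linarith)]
    ring

lemma continuous_quantileLorenz (N : ℕ) (g v : ℕ → ℝ) :
    Continuous (quantileLorenz N g v) := by
  unfold quantileLorenz massBelow
  fun_prop

lemma quantileLorenz_zero (hg : ∀ i, 0 ≤ g i) : quantileLorenz N g v 0 = 0 :=
  sum_eq_zero fun i _ => by rw [massBelow_of_le_cumMass hg (cumMass_nonneg hg i), mul_zero]

lemma quantileLorenz_cumMass (hg : ∀ i, 0 ≤ g i) :
    quantileLorenz N g v (cumMass g N) = ∑ i ∈ range N, g i * v i :=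
  sum_congr rfl fun i hi => by
    rw [massBelow_of_cumMass_succ_le hg (cumMass_mono hg (mem_range.1 hi)), mul_comm]

end QuantileLorenz

def window (g : ℕ → ℝ) (u h : ℝ) (i : ℕ) : ℝ := massBelow g (u + h) i - massBelow g u i

section Window

variable {N : ℕ} {g v : ℕ → ℝ} {u h : ℝ}

lemma window_nonneg (hg : ∀ i, 0 ≤ g i) (hh : 0 ≤ h) (i : ℕ) : 0 ≤ window g u h i :=
  sub_nonneg.2 (massBelow_mono hg i (by linarith))

lemma window_le (hg : ∀ i, 0 ≤ g i) (i : ℕ) : window g u h i ≤ g i := by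
  unfold window
  linarith [massBelow_le hg (u + h) i, massBelow_nonneg hg u i]

lemma sum_window (hu : 0 ≤ u) (hh : 0 ≤ h) (huh : u + h ≤ cumMass g N) :
    ∑ i ∈ range N, window g u h i = h := by
  simp only [window, sum_sub_distrib]
  rw [sum_massBelow_of_mem_Icc g ⟨by linarith, huh⟩,
    sum_massBelow_of_mem_Icc g ⟨hu, by linarith⟩]
  ring

lemma sum_window_mul :
    ∑ i ∈ range N, window g u h i * v i =
      quantileLorenz N g v (u + h) - quantileLorenz N g v u := by
  simp only [quantileLorenz, window, ← sum_sub_distrib]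
  exact sum_congr rfl fun i _ => by ring

lemma cumMass_sub_window (hu : 0 ≤ u) (hh : 0 ≤ h) (k : ℕ) :
    cumMass (fun i => g i - window g u h i) k =
      cumMass g k - min (u + h) (cumMass g k) + min u (cumMass g k) := by
  simp only [cumMass, window, sum_sub_distrib]
  rw [← cumMass, sum_massBelow, sum_massBelow, min_eq_right (by linarith : (0 : ℝ) ≤ u + h),
    min_eq_right hu]
  ring

/- `t - min (u + h) t + min u t` is where the level `t` lands once `[u, u + h]` is cut out of
the axis. -/
lemma min_cut_of_le (hh : 0 ≤ h) {y : ℝ} (hy : y ≤ u) (t : ℝ) :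
    min y (t - min (u + h) t + min u t) = min y t := by
  simp only [min_def]
  split_ifs <;> linarith

lemma min_cut_of_ge (hh : 0 ≤ h) {y : ℝ} (hy : u ≤ y) (t : ℝ) :
    min y (t - min (u + h) t + min u t) = min (y + h) t - min (u + h) t + min u t := by
  simp only [min_def]
  split_ifs <;> linarith

lemma massBelow_sub_window_of_le (hu : 0 ≤ u) (hh : 0 ≤ h) {y : ℝ} (hy : y ≤ u) (i : ℕ) :
    massBelow (fun i => g i - window g u h i) y i = massBelow g y i := by
  rw [massBelow, cumMass_sub_window hu hh, cumMass_sub_window hu hh, min_cut_of_le hh hy,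
    min_cut_of_le hh hy, massBelow]

lemma massBelow_sub_window_of_ge (hu : 0 ≤ u) (hh : 0 ≤ h) {y : ℝ} (hy : u ≤ y) (i : ℕ) :
    massBelow (fun i => g i - window g u h i) y i = massBelow g (y + h) i - window g u h i := by
  rw [massBelow, cumMass_sub_window hu hh, cumMass_sub_window hu hh, min_cut_of_ge hh hy,
    min_cut_of_ge hh hy, window, massBelow, massBelow, massBelow]
  ring

lemma quantileLorenz_sub_window_of_le (hu : 0 ≤ u) (hh : 0 ≤ h) {y : ℝ} (hy : y ≤ u) :
    quantileLorenz N (fun i => g i - window g u h i) v y = quantileLorenz N g v y := by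
  simp only [quantileLorenz, massBelow_sub_window_of_le hu hh hy]

lemma quantileLorenz_sub_window_of_ge (hu : 0 ≤ u) (hh : 0 ≤ h) {y : ℝ} (hy : u ≤ y) :
    quantileLorenz N (fun i => g i - window g u h i) v y =
      quantileLorenz N g v (y + h) - (quantileLorenz N g v (u + h) - quantileLorenz N g v u) := by
  rw [← sum_window_mul]
  simp only [quantileLorenz, massBelow_sub_window_of_ge hu hh hy, mul_sub, sum_sub_distrib]
  simp only [mul_comm]

end Window

lemma exists_add_sub_eq_of_continuous {f : ℝ → ℝ} (hf : Continuous f) {h T a : ℝ}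
    (hhT : h ≤ T) (hT : f T - f (T - h) ≤ a) (h0 : a ≤ f h - f 0) :
    ∃ u ∈ Set.Icc 0 (T - h), f (u + h) - f u = a := by
  have hcont : Continuous fun u => f (u + h) - f u := (hf.comp (continuous_add_const h)).sub hf
  exact intermediate_value_Icc' (sub_nonneg.2 hhT) hcont.continuousOn
    ⟨by simpa using hT, by simpa using h0⟩

structure LorenzBounded {κ : Type*} (s : Finset κ) (N : ℕ) (g v : ℕ → ℝ)
    (b q : κ → ℝ) : Prop where
  sum_mass : ∑ j ∈ s, b j = cumMass g N
  sum_value : ∑ j ∈ s, q j = ∑ i ∈ range N, g i * v i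
  sum_le : ∀ A ⊆ s, ∑ j ∈ A, q j ≤ quantileLorenz N g v (∑ j ∈ A, b j)

namespace LorenzBounded

variable {κ : Type*} [DecidableEq κ] {s : Finset κ} {j₀ : κ} {N : ℕ} {g v : ℕ → ℝ}
  {b q : κ → ℝ}

lemma exists_window (hg : ∀ i, 0 ≤ g i) (hb : ∀ j, 0 ≤ b j)
    (H : LorenzBounded (insert j₀ s) N g v b q) (hj₀ : j₀ ∉ s) :
    ∃ u ∈ Set.Icc 0 (cumMass g N - b j₀),
      quantileLorenz N g v (u + b j₀) - quantileLorenz N g v u = q j₀ := by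
  have hmass := H.sum_mass
  have hvalue := H.sum_value
  rw [sum_insert hj₀] at hmass hvalue
  have hrest := H.sum_le s (subset_insert _ _)
  have hsingle := H.sum_le {j₀} (by simp)
  rw [sum_singleton, sum_singleton] at hsingle
  refine exists_add_sub_eq_of_continuous (continuous_quantileLorenz N g v)
    (by linarith [sum_nonneg fun j (_ : j ∈ s) => hb j]) ?_ ?_
  · rw [quantileLorenz_cumMass hg, ← hmass, add_sub_cancel_left]
    linarith
  · rw [quantileLorenz_zero hg]
    linarith

lemma sub_window (hb : ∀ j, 0 ≤ b j)
    (H : LorenzBounded (insert j₀ s) N g v b q) (hj₀ : j₀ ∉ s) {u : ℝ}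
    (hu : u ∈ Set.Icc 0 (cumMass g N - b j₀))
    (hwin : quantileLorenz N g v (u + b j₀) - quantileLorenz N g v u = q j₀) :
    LorenzBounded s N (fun i => g i - window g u (b j₀) i) v b q where
  sum_mass := by
    have hmass := H.sum_mass
    rw [sum_insert hj₀] at hmass
    rw [cumMass_sub_window hu.1 (hb j₀), min_eq_left (by linarith [hu.2]),
      min_eq_left (by linarith [hu.2, hb j₀])]
    linarith
  sum_value := by
    have hvalue := H.sum_value
    rw [sum_insert hj₀] at hvalue
    simp only [sub_mul, sum_sub_distrib, sum_window_mul]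
    linarith
  sum_le A hA := by
    have hA₀ : j₀ ∉ A := fun h => hj₀ (hA h)
    rcases le_total (∑ j ∈ A, b j) u with hy | hy
    · rw [quantileLorenz_sub_window_of_le hu.1 (hb j₀) hy]
      exact H.sum_le A (hA.trans (subset_insert _ _))
    · rw [quantileLorenz_sub_window_of_ge hu.1 (hb j₀) hy, hwin]
      have := H.sum_le (insert j₀ A) (insert_subset_insert _ hA)
      rw [sum_insert hA₀, sum_insert hA₀, add_comm (b j₀)] at this
      linarith

end LorenzBounded

theorem LorenzBounded.exists_coupling {κ : Type*} [DecidableEq κ] {s : Finset κ} {N : ℕ}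
    {g v : ℕ → ℝ} {b q : κ → ℝ} (hg : ∀ i, 0 ≤ g i) (hb : ∀ j, 0 ≤ b j)
    (H : LorenzBounded s N g v b q) :
    ∃ P : κ → ℕ → ℝ, (∀ j i, 0 ≤ P j i) ∧ (∀ i < N, ∑ j ∈ s, P j i = g i) ∧
      ∀ j ∈ s, ∑ i ∈ range N, P j i = b j ∧ ∑ i ∈ range N, P j i * v i = q j := by
  induction s using Finset.induction_on generalizing g with
  | empty =>
    have hzero := (sum_eq_zero_iff_of_nonneg fun i _ => hg i).1
      (by simpa [cumMass] using H.sum_mass.symm)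
    exact ⟨0, fun _ _ => le_rfl, fun i hi => by simp [hzero i (mem_range.2 hi)], by simp⟩
  | insert j₀ s hj₀ ih =>
    obtain ⟨u, hu, hwin⟩ := H.exists_window hg hb hj₀
    obtain ⟨P, hP0, hPcol, hProw⟩ :=
      ih (fun i => sub_nonneg.2 (window_le hg i)) (H.sub_window hb hj₀ hu hwin)
    have hmass : u + b j₀ ≤ cumMass g N := by linarith [hu.2]
    refine ⟨Function.update P j₀ (window g u (b j₀)), fun j i => ?_, fun i hi => ?_, ?_⟩
    · rcases eq_or_ne j j₀ with rfl | hj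
      · simpa using window_nonneg hg (hb j) i
      · simpa [hj] using hP0 j i
    · rw [sum_insert hj₀, Function.update_self,
        sum_congr rfl fun j hj => by rw [Function.update_of_ne (ne_of_mem_of_not_mem hj hj₀)],
        hPcol i hi]
      ring
    · intro j hj
      rcases eq_or_ne j j₀ with rfl | hne
      · simp only [Function.update_self]
        exact ⟨sum_window hu.1 (hb j) hmass, by rw [sum_window_mul, hwin]⟩
      · simpa [hne] using hProw j ((mem_insert.1 hj).resolve_left hne)

def hockeyStick {ι : Type*} [Fintype ι] (p g : ι → ℝ) (c : ℝ) : ℝ :=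
  ∑ i, max (p i - c * g i) 0

lemma hockeyStick_le_of_colStochastic {ι κ : Type*} [Fintype ι] [Fintype κ]
    {M : Matrix κ ι ℝ} (hM : ColStochastic M) {p g : ι → ℝ} {q b : κ → ℝ}
    (hMg : M.mulVec g = b) (hMp : M.mulVec p = q) (c : ℝ) :
    hockeyStick q b c ≤ hockeyStick p g c := by
  have hrow : ∀ j, max (q j - c * b j) 0 ≤ ∑ i, M j i * max (p i - c * g i) 0 := fun j => by
    have hj : q j - c * b j = ∑ i, M j i * (p i - c * g i) := by
      simp only [← hMp, ← hMg, Matrix.mulVec, dotProduct, mul_sub, sum_sub_distrib, mul_sum]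
      exact congrArg _ (sum_congr rfl fun i _ => by ring)
    rw [hj]
    exact max_le (sum_le_sum fun i _ => mul_le_mul_of_nonneg_left (le_max_left _ _) (hM.1 j i))
      (sum_nonneg fun i _ => mul_nonneg (hM.1 j i) (le_max_right _ _))
  calc hockeyStick q b c ≤ ∑ j, ∑ i, M j i * max (p i - c * g i) 0 :=
        sum_le_sum fun j _ => hrow j
    _ = hockeyStick p g c := by
      rw [sum_comm]
      simp only [← sum_mul, hM.2, one_mul, hockeyStick]

lemma lorenzBounded_of_hockeyStick_le {κ : Type*} [Fintype κ] {N : ℕ} {g v : ℕ → ℝ}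
    {b q : κ → ℝ} (hg : ∀ i, 0 ≤ g i) (hv : AntitoneOn v (Set.Iio N))
    (hb : ∀ j, 0 ≤ b j)
    (hmass : ∑ j, b j = cumMass g N) (hvalue : ∑ j, q j = ∑ i ∈ range N, g i * v i)
    (hΦ : ∀ c, hockeyStick q b c ≤ ∑ i ∈ range N, g i * max (v i - c) 0) :
    LorenzBounded univ N g v b q where
  sum_mass := hmass
  sum_value := hvalue
  sum_le A _ := by
    have hx : ∑ j ∈ A, b j ∈ Set.Icc 0 (cumMass g N) :=
      ⟨sum_nonneg fun j _ => hb j,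
        hmass ▸ sum_le_sum_of_subset_of_nonneg (subset_univ A) fun j _ _ => hb j⟩
    obtain ⟨c, hc⟩ := exists_quantileLorenz_eq_add hg hv hx
    calc ∑ j ∈ A, q j = ∑ j ∈ A, (q j - c * b j) + c * ∑ j ∈ A, b j := by
          rw [mul_sum, ← sum_add_distrib]
          simp
      _ ≤ ∑ j ∈ A, max (q j - c * b j) 0 + c * ∑ j ∈ A, b j := by
          gcongr
          exact le_max_left _ _
      _ ≤ hockeyStick q b c + c * ∑ j ∈ A, b j := by
          gcongr
          exact sum_le_sum_of_subset_of_nonneg (subset_univ A) fun j _ _ => le_max_right _ _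
      _ ≤ _ := by rw [hc]; gcongr; exact hΦ c

def orderedSeq {ι : Type*} {N : ℕ} (e : Fin N ≃ ι) (f : ι → ℝ) (k : ℕ) : ℝ :=
  if h : k < N then f (e ⟨k, h⟩) else 0

section OrderedSeq

variable {ι : Type*} {N : ℕ} (e : Fin N ≃ ι)

@[simp] lemma orderedSeq_val (f : ι → ℝ) (k : Fin N) : orderedSeq e f k = f (e k) := by
  simp [orderedSeq]

lemma orderedSeq_nonneg {f : ι → ℝ} (hf : ∀ i, 0 ≤ f i) (k : ℕ) :
    0 ≤ orderedSeq e f k := by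
  unfold orderedSeq
  split_ifs
  exacts [hf _, le_rfl]

lemma orderedSeq_mul_div {g : ι → ℝ} (hg : ∀ i, 0 < g i) (p : ι → ℝ) (k : ℕ) :
    orderedSeq e g k * orderedSeq e (fun i => p i / g i) k = orderedSeq e p k := by
  unfold orderedSeq
  split_ifs
  · exact mul_div_cancel₀ _ (hg _).ne'
  · exact mul_zero 0

lemma antitoneOn_orderedSeq {f : ι → ℝ} (hf : Antitone (f ∘ e)) :
    AntitoneOn (orderedSeq e f) (Set.Iio N) := fun a ha b hb hab => by
  simpa [orderedSeq, dif_pos (show a < N from ha), dif_pos (show b < N from hb)] using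
    hf (show (⟨a, ha⟩ : Fin N) ≤ ⟨b, hb⟩ from hab)

lemma sum_range_eq_sum_symm [Fintype ι] (φ : ℕ → ℝ) :
    ∑ k ∈ range N, φ k = ∑ i, φ (e.symm i) := by
  rw [← Fin.sum_univ_eq_sum_range, ← e.symm.sum_comp (fun k => φ k)]

lemma cumMass_orderedSeq [Fintype ι] (f : ι → ℝ) :
    cumMass (orderedSeq e f) N = ∑ i, f i := by
  simp [cumMass, sum_range_eq_sum_symm e]

lemma sum_orderedSeq_mul_div [Fintype ι] {g : ι → ℝ} (hg : ∀ i, 0 < g i) (p : ι → ℝ) :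
    ∑ k ∈ range N, orderedSeq e g k * orderedSeq e (fun i => p i / g i) k = ∑ i, p i := by
  simp only [orderedSeq_mul_div e hg]
  exact cumMass_orderedSeq e p

lemma hockeyStick_eq_sum_orderedSeq [Fintype ι] {g : ι → ℝ} (hg : ∀ i, 0 < g i)
    (p : ι → ℝ) (c : ℝ) :
    hockeyStick p g c =
      ∑ k ∈ range N, orderedSeq e g k * max (orderedSeq e (fun i => p i / g i) k - c) 0 := by
  rw [sum_range_eq_sum_symm e]
  refine sum_congr rfl fun i _ => ?_
  rw [orderedSeq_val, orderedSeq_val, e.apply_symm_apply, mul_max_of_nonneg _ _ (hg i).le,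
    mul_zero, mul_sub, mul_div_cancel₀ _ (hg i).ne', mul_comm]

end OrderedSeq

lemma exists_equiv_antitone {ι : Type*} [Fintype ι] (f : ι → ℝ) :
    ∃ e : Fin (Fintype.card ι) ≃ ι, Antitone (f ∘ e) := by
  let f' : Fin (Fintype.card ι) → ℝᵒᵈ :=
    fun k => OrderDual.toDual (f ((Fintype.equivFin ι).symm k))
  exact ⟨(Tuple.sort f').trans (Fintype.equivFin ι).symm,
    fun a b hab => Tuple.monotone_sort f' hab⟩

theorem exists_colStochastic_of_hockeyStick_le {ι κ : Type*} [Fintype ι] [Fintype κ]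
    {p g : ι → ℝ} {q b : κ → ℝ} (hg : ∀ i, 0 < g i) (hb : ∀ j, 0 ≤ b j)
    (hmass : ∑ j, b j = ∑ i, g i) (hvalue : ∑ j, q j = ∑ i, p i)
    (hΦ : ∀ c, hockeyStick q b c ≤ hockeyStick p g c) :
    ∃ M : Matrix κ ι ℝ, ColStochastic M ∧ M.mulVec g = b ∧ M.mulVec p = q := by
  classical
  obtain ⟨e, he⟩ := exists_equiv_antitone fun i => p i / g i
  have hgN := orderedSeq_nonneg e fun i => (hg i).le
  have H : LorenzBounded univ _ (orderedSeq e g) (orderedSeq e fun i => p i / g i) b q :=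
    lorenzBounded_of_hockeyStick_le hgN (antitoneOn_orderedSeq e he) hb
      (by rw [cumMass_orderedSeq, hmass]) (by rw [sum_orderedSeq_mul_div e hg, hvalue])
      (fun c => by rw [← hockeyStick_eq_sum_orderedSeq e hg]; exact hΦ c)
  obtain ⟨P, hP0, hPcol, hProw⟩ := H.exists_coupling hgN hb
  have hrow (j : κ) (φ : ι → ℝ) :
      ∑ i, P j (e.symm i) * φ i =
        ∑ k ∈ range (Fintype.card ι), P j k * orderedSeq e φ k := by
    simp [sum_range_eq_sum_symm e]
  refine ⟨fun j i => P j (e.symm i) / g i,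
    ⟨fun j i => div_nonneg (hP0 _ _) (hg i).le, fun i => ?_⟩, funext fun j => ?_,
    funext fun j => ?_⟩
  · rw [← sum_div, hPcol _ (e.symm i).isLt, orderedSeq_val, e.apply_symm_apply,
      div_self (hg i).ne']
  · simp only [Matrix.mulVec, dotProduct, div_mul_cancel₀ _ (hg _).ne']
    simpa [sum_range_eq_sum_symm e] using (hProw j (mem_univ j)).1
  · simp only [Matrix.mulVec, dotProduct, div_mul_eq_mul_div, mul_div_assoc, hrow]
    exact (hProw j (mem_univ j)).2

lemma cumul_eq_cumMass {ι : Type*} [Fintype ι] (f : ι → ℝ) (e : Fin (Fintype.card ι) ≃ ι)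
    (m : ℕ) : cumul f e m = cumMass (orderedSeq e f) m := by
  rw [cumul, sum_filter, cumMass]
  simp_rw [← orderedSeq_val e f]
  rw [Fin.sum_univ_eq_sum_range (fun k => if k < m then orderedSeq e f k else 0), ← sum_filter]
  refine sum_subset (fun k hk => mem_range.2 (mem_filter.1 hk).2) fun k hkm hk => ?_
  have : ¬k < Fintype.card ι := fun h => hk (mem_filter.2 ⟨mem_range.2 h, mem_range.1 hkm⟩)
  simp [orderedSeq, this]

namespace IsLorenzCurveOf

variable {ι : Type*} [Fintype ι] [Nonempty ι] {v g : ι → ℝ} {L : ℝ → ℝ}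

lemma exists_eq_quantileLorenz (hg : ∀ i, 0 < g i) (hL : IsLorenzCurveOf v g L) :
    ∃ e : Fin (Fintype.card ι) ≃ ι, Antitone ((fun i => v i / g i) ∘ e) ∧
      ∀ x ∈ Set.Icc 0 (∑ i, g i),
        L x = quantileLorenz (Fintype.card ι) (orderedSeq e g)
          (orderedSeq e fun i => v i / g i) x := by
  obtain ⟨e, hsort, hint⟩ := hL
  refine ⟨e, fun a b hab => hsort a b hab, fun x hx => ?_⟩
  rw [← cumMass_orderedSeq e] at hx
  obtain ⟨m, hm, h₁, h₂⟩ := exists_cumMass_segment Fintype.card_pos hx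
  rw [hint ⟨m, hm⟩ x (by rwa [cumul_eq_cumMass]) (by rwa [cumul_eq_cumMass]),
    quantileLorenz_of_mem_segment (orderedSeq_nonneg e fun i => (hg i).le) hm h₁ h₂,
    cumul_eq_cumMass, cumul_eq_cumMass, cumMass]
  simp only [orderedSeq_mul_div e hg]
  simp [orderedSeq, hm]

lemma le_hockeyStick_add (hg : ∀ i, 0 < g i) (hL : IsLorenzCurveOf v g L) {x : ℝ}
    (hx : x ∈ Set.Icc 0 (∑ i, g i)) (c : ℝ) : L x ≤ hockeyStick v g c + c * x := by
  obtain ⟨e, -, hLe⟩ := hL.exists_eq_quantileLorenz hg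
  rw [hLe x hx, hockeyStick_eq_sum_orderedSeq e hg]
  exact quantileLorenz_le_add (orderedSeq_nonneg e fun i => (hg i).le)
    (by rwa [cumMass_orderedSeq]) c

lemma exists_eq_hockeyStick_add (hg : ∀ i, 0 < g i) (hL : IsLorenzCurveOf v g L) {x : ℝ}
    (hx : x ∈ Set.Icc 0 (∑ i, g i)) : ∃ c, L x = hockeyStick v g c + c * x := by
  obtain ⟨e, he, hLe⟩ := hL.exists_eq_quantileLorenz hg
  simp only [hLe x hx, hockeyStick_eq_sum_orderedSeq e hg]
  exact exists_quantileLorenz_eq_add (orderedSeq_nonneg e fun i => (hg i).le)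
    (antitoneOn_orderedSeq e he) (by rwa [cumMass_orderedSeq])

lemma exists_hockeyStick_eq (hg : ∀ i, 0 < g i) (hL : IsLorenzCurveOf v g L) (c : ℝ) :
    ∃ x ∈ Set.Icc 0 (∑ i, g i), hockeyStick v g c = L x - c * x := by
  obtain ⟨e, he, hLe⟩ := hL.exists_eq_quantileLorenz hg
  obtain ⟨x, hx, hxc⟩ := exists_quantileLorenz_sub_mul_eq
    (orderedSeq_nonneg e fun i => (hg i).le) (antitoneOn_orderedSeq e he) c
  rw [cumMass_orderedSeq] at hx
  exact ⟨x, hx, by rw [hLe x hx, hxc, hockeyStick_eq_sum_orderedSeq e hg]⟩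

theorem le_iff_hockeyStick_le {p q : ι → ℝ} {L₁ L₂ : ℝ → ℝ} (hg : ∀ i, 0 < g i)
    (hL₁ : IsLorenzCurveOf p g L₁) (hL₂ : IsLorenzCurveOf q g L₂) :
    (∀ x ∈ Set.Icc 0 (∑ i, g i), L₂ x ≤ L₁ x) ↔
      ∀ c, hockeyStick q g c ≤ hockeyStick p g c := by
  refine ⟨fun hle c => ?_, fun hΦ x hx => ?_⟩
  · obtain ⟨x, hx, hxc⟩ := hL₂.exists_hockeyStick_eq hg c
    linarith [hle x hx, hL₁.le_hockeyStick_add hg hx c]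
  · obtain ⟨c, hc⟩ := hL₁.exists_eq_hockeyStick_add hg hx
    linarith [hL₂.le_hockeyStick_add hg hx c, hΦ c]

end IsLorenzCurveOf

lemma sum_tens {ι κ : Type*} [Fintype ι] [Fintype κ] (r : ι → ℝ) (s : κ → ℝ) :
    ∑ x, tens r s x = (∑ i, r i) * ∑ j, s j := by
  rw [sum_mul_sum, Fintype.sum_prod_type]
  rfl

/-- equimajorization for states on different systems is equivalent to
domination of the rescaled Lorenz curves of `r ⊗ g_S` and `g_R ⊗ s`. -/
theorem equimajorization_iff_lorenz_diff_systems {d d' : ℕ}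
    (r gR : Fin d → ℝ) (s gS : Fin d' → ℝ)
    (hr : IsProbVec r) (hgR : IsProbVec gR) (hs : IsProbVec s) (hgS : IsProbVec gS)
    (hgRpos : ∀ i, 0 < gR i) (hgSpos : ∀ i, 0 < gS i)
    (L₁ L₂ : ℝ → ℝ)
    (hL₁ : IsLorenzCurveOf (tens r gS) (tens gR gS) L₁)
    (hL₂ : IsLorenzCurveOf (tens gR s) (tens gR gS) L₂) :
    (∃ M : Matrix (Fin d × Fin d') (Fin d × Fin d') ℝ, ColStochastic M ∧
      M.mulVec (tens gR gS) = tens gR gS ∧ M.mulVec (tens r gS) = tens gR s) ↔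
    (∀ x ∈ Set.Icc (0 : ℝ) 1, L₂ x ≤ L₁ x) := by
  have hg (x : Fin d × Fin d') : 0 < tens gR gS x := mul_pos (hgRpos _) (hgSpos _)
  have hmass : ∑ x, tens gR gS x = 1 := by rw [sum_tens, hgR.2, hgS.2, one_mul]
  have hvalue : ∑ x, tens gR s x = ∑ x, tens r gS x := by
    rw [sum_tens, sum_tens, hr.2, hs.2, hgR.2, hgS.2]
  have : Nonempty (Fin d × Fin d') :=
    (nonempty_of_sum_ne_zero (hmass ▸ one_ne_zero : ∑ x, tens gR gS x ≠ 0)).to_type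
  have hLorenz := hL₁.le_iff_hockeyStick_le hg hL₂
  rw [hmass] at hLorenz
  rw [hLorenz]
  exact ⟨fun ⟨M, hM, hMg, hMp⟩ => hockeyStick_le_of_colStochastic hM hMg hMp,
    exists_colStochastic_of_hockeyStick_le hg (fun x => (hg x).le) rfl hvalue⟩
end

section
/- The two formulations of equimajorization agree for states defined on the same system: for probability vectors r, s and a strictly positive probability vector g on Fin d, there exists a column-stochastic d×d matrix M with M g = g and M r = s if and only if there exists a column-stochastic matrix M' on Fin d × Fin d with M' (g ⊗ g) = g ⊗ g and M' (r ⊗ g) = g ⊗ s. -/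
open Finset Real Filter

/-! A channel `M` on the system gives the channel `swap ∘ (M ⊗ 1)` on the composite system,
which maps `v ⊗ g` to `g ⊗ M v`. Conversely, a channel `M'` on the composite system induces
the channel `v ↦ (second marginal of M' (v ⊗ g))` on the system; as `g` sums to one, it sends
`g` and `r` to the second marginals of `g ⊗ g` and `g ⊗ s`, namely `g` and `s`. -/

open Matrix
open scoped Kronecker

section

variable {ι κ μ ν : Type*}

theorem tens_comp_swap (v : ι → ℝ) (w : κ → ℝ) : tens v w ∘ Prod.swap = tens w v :=
  funext fun _ => mul_comm _ _

theorem submatrix_swap_mulVec [Fintype μ] [Fintype ν] (M : Matrix (ι × κ) (μ × ν) ℝ)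
    (x : μ × ν → ℝ) : M.submatrix Prod.swap id *ᵥ x = (M *ᵥ x) ∘ Prod.swap :=
  rfl

theorem kronecker_mulVec_tens [Fintype ι] [Fintype κ] (A : Matrix μ ι ℝ) (B : Matrix ν κ ℝ)
    (v : ι → ℝ) (w : κ → ℝ) : (A ⊗ₖ B) *ᵥ tens v w = tens (A *ᵥ v) (B *ᵥ w) := by
  ext ⟨i, k⟩
  simp only [mulVec, dotProduct, kronecker_apply, tens, Fintype.sum_prod_type,
    Finset.sum_mul_sum]
  exact Finset.sum_congr rfl fun _ _ => Finset.sum_congr rfl fun _ _ => by ring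

theorem colStochastic_one [Fintype ι] [DecidableEq ι] : ColStochastic (1 : Matrix ι ι ℝ) :=
  ⟨fun i j => by rw [one_apply]; split_ifs <;> norm_num,
    fun j => by simp only [one_apply, Finset.sum_ite_eq', Finset.mem_univ, if_true]⟩

theorem ColStochastic.mul [Fintype ι] [Fintype κ] [Fintype μ] {A : Matrix μ κ ℝ}
    {B : Matrix κ ι ℝ} (hA : ColStochastic A) (hB : ColStochastic B) :
    ColStochastic (A * B) := by
  refine ⟨fun i j => Finset.sum_nonneg fun k _ => mul_nonneg (hA.1 i k) (hB.1 k j), fun j => ?_⟩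
  simp only [mul_apply]
  rw [Finset.sum_comm]
  simp only [← Finset.sum_mul, hA.2, one_mul, hB.2]

theorem ColStochastic.kronecker [Fintype ι] [Fintype κ] [Fintype μ] [Fintype ν]
    {A : Matrix μ ι ℝ} {B : Matrix ν κ ℝ} (hA : ColStochastic A) (hB : ColStochastic B) :
    ColStochastic (A ⊗ₖ B) := by
  refine ⟨fun p q => mul_nonneg (hA.1 _ _) (hB.1 _ _), fun q => ?_⟩
  have hAB : ∀ i k, (A ⊗ₖ B) (i, k) q = A i q.1 * B k q.2 := fun _ _ => rfl
  simp only [Fintype.sum_prod_type, hAB, ← Finset.sum_mul_sum, hA.2, hB.2, one_mul]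

theorem ColStochastic.submatrix_equiv [Fintype ι] [Fintype μ] [Fintype ν] {M : Matrix μ ι ℝ}
    (hM : ColStochastic M) (e : ν ≃ μ) : ColStochastic (M.submatrix e id) :=
  ⟨fun _ _ => hM.1 _ _, fun j => (e.sum_comp fun i => M i j).trans (hM.2 j)⟩

def appendState [DecidableEq ι] (g : κ → ℝ) : Matrix (ι × κ) ι ℝ :=
  of fun p i => if p.1 = i then g p.2 else 0

theorem IsProbVec.colStochastic_appendState [Fintype ι] [Fintype κ] [DecidableEq ι]
    {g : κ → ℝ} (hg : IsProbVec g) : ColStochastic (appendState (ι := ι) g) := by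
  refine ⟨fun p i => ?_, fun i => ?_⟩
  · simp only [appendState, of_apply]
    split_ifs
    exacts [hg.1 _, le_rfl]
  · simp [appendState, Fintype.sum_prod_type, hg.2]

theorem appendState_mulVec [Fintype ι] [DecidableEq ι] (g : κ → ℝ) (v : ι → ℝ) :
    appendState g *ᵥ v = tens v g := by
  ext p
  simp [appendState, mulVec, dotProduct, tens, mul_comm]

def sndMarginal [DecidableEq κ] : Matrix κ (ι × κ) ℝ :=
  of fun k p => if p.2 = k then 1 else 0

theorem colStochastic_sndMarginal [Fintype ι] [Fintype κ] [DecidableEq κ] :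
    ColStochastic (sndMarginal : Matrix κ (ι × κ) ℝ) := by
  refine ⟨fun k p => ?_, fun p => ?_⟩
  · simp only [sndMarginal, of_apply]
    split_ifs <;> norm_num
  · simp only [sndMarginal, of_apply, Finset.sum_ite_eq, Finset.mem_univ, if_true]

theorem sndMarginal_mulVec_tens [Fintype ι] [Fintype κ] [DecidableEq κ] {v : ι → ℝ}
    (hv : ∑ i, v i = 1) (w : κ → ℝ) : sndMarginal *ᵥ tens v w = w := by
  ext k
  simp [sndMarginal, mulVec, dotProduct, tens, Fintype.sum_prod_type, ← Finset.sum_mul, hv]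

-- Without the ascriptions the heterogeneous products default to `CStarMatrix`'s `HMul`.
def reducedChannel [Fintype ι] [Fintype κ] [Fintype μ] [Fintype ν] [DecidableEq ι]
    [DecidableEq ν] (M : Matrix (μ × ν) (ι × κ) ℝ) (g : κ → ℝ) : Matrix ν ι ℝ :=
  (sndMarginal : Matrix ν (μ × ν) ℝ) * M * (appendState g : Matrix (ι × κ) ι ℝ)

theorem ColStochastic.reducedChannel [Fintype ι] [Fintype κ] [Fintype μ] [Fintype ν]
    [DecidableEq ι] [DecidableEq ν] {M : Matrix (μ × ν) (ι × κ) ℝ} (hM : ColStochastic M)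
    {g : κ → ℝ} (hg : IsProbVec g) : ColStochastic (reducedChannel M g) :=
  (colStochastic_sndMarginal.mul hM).mul hg.colStochastic_appendState

theorem reducedChannel_mulVec [Fintype ι] [Fintype κ] [Fintype μ] [Fintype ν] [DecidableEq ι]
    [DecidableEq ν] (M : Matrix (μ × ν) (ι × κ) ℝ) (g : κ → ℝ) (v : ι → ℝ) :
    reducedChannel M g *ᵥ v = sndMarginal *ᵥ M *ᵥ tens v g := by
  rw [reducedChannel, ← mulVec_mulVec, ← mulVec_mulVec, appendState_mulVec]

end

theorem equimajorizes_iff_composed_general {d : ℕ} (r s g : Fin d → ℝ) (hg : IsProbVec g) :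
    (∃ M : Matrix (Fin d) (Fin d) ℝ, ColStochastic M ∧ M.mulVec g = g ∧ M.mulVec r = s) ↔
    (∃ M' : Matrix (Fin d × Fin d) (Fin d × Fin d) ℝ, ColStochastic M' ∧
      M'.mulVec (tens g g) = tens g g ∧ M'.mulVec (tens r g) = tens g s) := by
  constructor
  · rintro ⟨M, hM, hMg, hMr⟩
    have hM' (v : Fin d → ℝ) :
        (M ⊗ₖ 1).submatrix Prod.swap id *ᵥ tens v g = tens g (M *ᵥ v) := by
      rw [submatrix_swap_mulVec, kronecker_mulVec_tens, one_mulVec, tens_comp_swap]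
    refine ⟨(M ⊗ₖ 1).submatrix Prod.swap id,
      (hM.kronecker colStochastic_one).submatrix_equiv (Equiv.prodComm _ _), ?_, ?_⟩
    · rw [hM', hMg]
    · rw [hM', hMr]
  · rintro ⟨M', hM', hM'g, hM'r⟩
    refine ⟨reducedChannel M' g, hM'.reducedChannel hg, ?_, ?_⟩
    · rw [reducedChannel_mulVec, hM'g, sndMarginal_mulVec_tens hg.2]
    · rw [reducedChannel_mulVec, hM'r, sndMarginal_mulVec_tens hg.2]

/-- the two formulations of equimajorization agree for states on the same
system. -/
theorem equimajorizes_iff_composed {d : ℕ} (r s g : Fin d → ℝ)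
    (hr : IsProbVec r) (hs : IsProbVec s) (hg : IsProbVec g) (hgpos : ∀ i, 0 < g i) :
    (∃ M : Matrix (Fin d) (Fin d) ℝ, ColStochastic M ∧ M.mulVec g = g ∧ M.mulVec r = s) ↔
    (∃ M' : Matrix (Fin d × Fin d) (Fin d × Fin d) ℝ, ColStochastic M' ∧
      M'.mulVec (tens g g) = tens g g ∧ M'.mulVec (tens r g) = tens g s) :=
  equimajorizes_iff_composed_general r s g hg
end

section
/- (Asymptotic equipartition for the hypothesis-testing relative entropy) Let r and g be probability vectors on Fin d with g strictly positive. Then for every ε ∈ (0,1), lim_{n→∞} (1/n) · D_H^ε(r^{⊗n} ‖ g^{⊗n}) = D(r ‖ g). -/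
/-!
Under `r^{⊗n}` the log-likelihood ratio `log r^{⊗n} - log g^{⊗n}` is a sum of `n` i.i.d. copies
of `log r - log g`, whose mean is `D(r ‖ g)`; by Chebyshev's inequality it lies in
`[n (D - δ), n (D + δ)]` outside a set of `r^{⊗n}`-mass `O(1/n)`. A test accepting exactly where
the ratio exceeds `n (D - δ)` shows `b_ε ≤ exp (-n (D - δ))`, and comparing an arbitrary test
with `g^{⊗n}` on the set where the ratio is below `n (D + δ)` shows
`b_ε ≥ exp (-n (D + δ)) (1 - ε - O(1/n))`.
-/

open Finset Real Filter

section OneShot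

variable {ι : Type*} [Fintype ι] {P G Q : ι → ℝ} {ε : ℝ}

lemma bEps_le (hG : ∀ i, 0 ≤ G i) (hQ : ∀ i, 0 ≤ Q i ∧ Q i ≤ 1)
    (hQP : 1 - ε ≤ ∑ i, Q i * P i) : bEps ε P G ≤ ∑ i, Q i * G i := by
  refine csInf_le ⟨0, ?_⟩ ⟨Q, hQ, hQP, rfl⟩
  rintro _ ⟨Q', hQ', -, rfl⟩
  exact sum_nonneg fun i _ => mul_nonneg (hQ' i).1 (hG i)

lemma le_bEps {y : ℝ} (hP : 1 - ε ≤ ∑ i, P i)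
    (h : ∀ Q : ι → ℝ, (∀ i, 0 ≤ Q i ∧ Q i ≤ 1) → 1 - ε ≤ ∑ i, Q i * P i →
      y ≤ ∑ i, Q i * G i) :
    y ≤ bEps ε P G := by
  refine le_csInf ⟨_, fun _ => 1, fun _ => ⟨zero_le_one, le_rfl⟩, by simpa using hP, rfl⟩ ?_
  rintro _ ⟨Q, hQ, hQP, rfl⟩
  exact h Q hQ hQP

lemma bEps_le_exp_neg {θ : ℝ} (hP : IsProbVec P) (hG : ∀ i, 0 ≤ G i)
    (htail : ∑ i with P i < exp θ * G i, P i ≤ ε) :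
    bEps ε P G ≤ exp (-θ) := by
  classical
  set A := univ.filter fun i => exp θ * G i ≤ P i
  have hsplit : ∑ i ∈ A, P i + ∑ i with P i < exp θ * G i, P i = 1 := by
    simp_rw [← not_le, A, sum_filter_add_sum_filter_not, hP.2]
  have hG_le : ∀ i ∈ A, G i ≤ exp (-θ) * P i := fun i hi => by
    rw [exp_neg, ← div_eq_inv_mul, le_div_iff₀' (exp_pos θ)]
    exact (mem_filter.1 hi).2
  have hA_le : ∑ i ∈ A, P i ≤ 1 := by
    rw [← hP.2]
    exact sum_le_sum_of_subset_of_nonneg (subset_univ A) fun i _ _ => hP.1 i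
  calc bEps ε P G ≤ ∑ i, (if i ∈ A then 1 else 0) * G i := by
        refine bEps_le hG (fun i => by split_ifs <;> norm_num) ?_
        simp only [ite_mul, one_mul, zero_mul, sum_ite_mem, univ_inter]
        linarith
    _ = ∑ i ∈ A, G i := by simp only [ite_mul, one_mul, zero_mul, sum_ite_mem, univ_inter]
    _ ≤ ∑ i ∈ A, exp (-θ) * P i := sum_le_sum hG_le
    _ ≤ exp (-θ) := by
        rw [← mul_sum]
        exact mul_le_of_le_one_right (exp_pos _).le hA_le

lemma exp_neg_mul_le_bEps {θ c : ℝ} (hP : IsProbVec P) (hG : ∀ i, 0 ≤ G i) (hε : 0 ≤ ε)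
    (htail : ∑ i with exp θ * G i < P i, P i ≤ c) :
    exp (-θ) * (1 - ε - c) ≤ bEps ε P G := by
  classical
  refine le_bEps (by linarith [hP.2]) fun Q hQ hQP => ?_
  set C := univ.filter fun i => P i ≤ exp θ * G i
  have hQC : 1 - ε - c ≤ ∑ i ∈ C, Q i * P i := by
    have hsplit := sum_filter_add_sum_filter_not univ (fun i => P i ≤ exp θ * G i)
      fun i => Q i * P i
    have hout : ∑ i with ¬P i ≤ exp θ * G i, Q i * P i ≤ c := by
      simp_rw [not_le] at hsplit ⊢
      exact (sum_le_sum fun i _ => mul_le_of_le_one_left (hP.1 i) (hQ i).2).trans htail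
    linarith
  have hQG : ∀ i ∈ C, exp (-θ) * (Q i * P i) ≤ Q i * G i := fun i hi => by
    rw [mul_left_comm]
    refine mul_le_mul_of_nonneg_left ?_ (hQ i).1
    rw [exp_neg, ← div_eq_inv_mul, div_le_iff₀' (exp_pos θ)]
    exact (mem_filter.1 hi).2
  calc exp (-θ) * (1 - ε - c) ≤ exp (-θ) * ∑ i ∈ C, Q i * P i :=
        mul_le_mul_of_nonneg_left hQC (exp_pos _).le
    _ ≤ ∑ i ∈ C, Q i * G i := by rw [mul_sum]; exact sum_le_sum hQG
    _ ≤ ∑ i, Q i * G i :=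
        sum_le_sum_of_subset_of_nonneg (subset_univ C) fun i _ _ => mul_nonneg (hQ i).1 (hG i)

lemma DH_mem_Icc {θ₁ θ₂ c : ℝ} (hP : IsProbVec P) (hG : ∀ i, 0 ≤ G i) (hε : 0 ≤ ε)
    (hc : c < 1 - ε) (hlow : ∑ i with P i < exp θ₁ * G i, P i ≤ ε)
    (hhigh : ∑ i with exp θ₂ * G i < P i, P i ≤ c) :
    DH ε P G ∈ Set.Icc θ₁ (θ₂ - log (1 - ε - c)) := by
  have hlower := exp_neg_mul_le_bEps hP hG hε hhigh
  have hpos : 0 < exp (-θ₂) * (1 - ε - c) := mul_pos (exp_pos _) (by linarith)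
  constructor
  · have := log_le_log (hpos.trans_le hlower) (bEps_le_exp_neg hP hG hlow)
    rw [log_exp] at this
    rw [DH]
    linarith
  · have := log_le_log hpos hlower
    rw [log_mul (exp_pos _).ne' (by linarith), log_exp] at this
    rw [DH]
    linarith

end OneShot

section TensorPower

variable {d n : ℕ} {r : Fin d → ℝ}

lemma tensPow_nonneg (hr : ∀ i, 0 ≤ r i) (f : Fin n → Fin d) : 0 ≤ tensPow r n f :=
  prod_nonneg fun k _ => hr (f k)

lemma tensPow_pos (hr : ∀ i, 0 < r i) (f : Fin n → Fin d) : 0 < tensPow r n f :=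
  prod_pos fun k _ => hr (f k)

lemma sum_tensPow_mul_prod (hr : ∑ i, r i = 1) (s : Finset (Fin n)) (φ : Fin d → ℝ) :
    ∑ f, tensPow r n f * ∏ k ∈ s, φ (f k) = (∑ i, r i * φ i) ^ s.card := by
  calc ∑ f, tensPow r n f * ∏ k ∈ s, φ (f k)
      = ∑ f : Fin n → Fin d, ∏ k, r (f k) * (if k ∈ s then φ (f k) else 1) := by
        simp only [tensPow, prod_mul_distrib, prod_ite_mem, univ_inter]
    _ = ∏ k : Fin n, ∑ i, r i * (if k ∈ s then φ i else 1) := by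
        rw [prod_univ_sum, Fintype.piFinset_univ]
    _ = ∏ k, if k ∈ s then ∑ i, r i * φ i else 1 := by
        refine prod_congr rfl fun k _ => ?_
        split_ifs <;> simp [hr]
    _ = (∑ i, r i * φ i) ^ s.card := by rw [prod_ite_mem, univ_inter, prod_const]

lemma isProbVec_tensPow (hr : IsProbVec r) : IsProbVec (tensPow r n) :=
  ⟨tensPow_nonneg hr.1, by simpa using sum_tensPow_mul_prod (n := n) hr.2 ∅ fun _ => 1⟩

lemma sum_tensPow_mul_sum_sq (hr : ∑ i, r i = 1) {Y : Fin d → ℝ} (hY : ∑ i, r i * Y i = 0) :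
    ∑ f, tensPow r n f * (∑ k, Y (f k)) ^ 2 = n * ∑ i, r i * Y i ^ 2 := by
  have hcov : ∀ k l : Fin n, ∑ f, tensPow r n f * (Y (f k) * Y (f l))
      = if k = l then ∑ i, r i * Y i ^ 2 else 0 := by
    intro k l
    split_ifs with hkl
    · subst hkl
      simpa [sq] using sum_tensPow_mul_prod hr {k} fun i => Y i * Y i
    · simpa [prod_pair hkl, hY] using sum_tensPow_mul_prod hr {k, l} Y
  calc ∑ f, tensPow r n f * (∑ k, Y (f k)) ^ 2
      = ∑ f, ∑ k, ∑ l, tensPow r n f * (Y (f k) * Y (f l)) := by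
        refine sum_congr rfl fun f _ => ?_
        rw [sq, sum_mul_sum, mul_sum]
        simp only [mul_sum]
    _ = ∑ k, ∑ l, ∑ f, tensPow r n f * (Y (f k) * Y (f l)) := by
        rw [sum_comm]; exact sum_congr rfl fun _ _ => sum_comm
    _ = n * ∑ i, r i * Y i ^ 2 := by simp [hcov]

lemma sum_tensPow_filter_le_abs_le (hr : IsProbVec r) {Y : Fin d → ℝ}
    (hY : ∑ i, r i * Y i = 0) {t : ℝ} (ht : 0 < t) :
    ∑ f with t ≤ |∑ k, Y (f k)|, tensPow r n f ≤ n * (∑ i, r i * Y i ^ 2) / t ^ 2 := by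
  rw [← sum_tensPow_mul_sum_sq hr.2 hY, le_div_iff₀ (by positivity), sum_mul]
  calc ∑ f with t ≤ |∑ k, Y (f k)|, tensPow r n f * t ^ 2
      ≤ ∑ f with t ≤ |∑ k, Y (f k)|, tensPow r n f * (∑ k, Y (f k)) ^ 2 := by
        refine sum_le_sum fun f hf => mul_le_mul_of_nonneg_left ?_ (tensPow_nonneg hr.1 f)
        rw [← sq_abs (∑ k, Y (f k))]
        exact pow_le_pow_left₀ ht.le (mem_filter.1 hf).2 2
    _ ≤ ∑ f, tensPow r n f * (∑ k, Y (f k)) ^ 2 :=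
        sum_le_sum_of_subset_of_nonneg (filter_subset _ _)
          fun f _ _ => mul_nonneg (tensPow_nonneg hr.1 f) (sq_nonneg _)

end TensorPower

section LogRatio

variable {d n : ℕ} {r g : Fin d → ℝ}

noncomputable def logRatio (r g : Fin d → ℝ) (i : Fin d) : ℝ := log (r i) - log (g i)

noncomputable def relEntVar (r g : Fin d → ℝ) : ℝ :=
  ∑ i, r i * (logRatio r g i - relEnt r g) ^ 2

lemma relEntVar_nonneg (hr : IsProbVec r) : 0 ≤ relEntVar r g :=
  sum_nonneg fun i _ => mul_nonneg (hr.1 i) (sq_nonneg _)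

lemma log_tensPow_sub_log_tensPow (hg : ∀ i, 0 < g i) {f : Fin n → Fin d}
    (hf : tensPow r n f ≠ 0) :
    log (tensPow r n f) - log (tensPow g n f) = ∑ k, logRatio r g (f k) := by
  have hr : ∀ k ∈ univ, r (f k) ≠ 0 := fun k _ hk => hf (prod_eq_zero (mem_univ k) hk)
  rw [tensPow, tensPow, log_prod hr, log_prod fun k _ => (hg (f k)).ne', ← sum_sub_distrib]
  rfl

lemma sum_tensPow_atypical_le (hr : IsProbVec r) (hn : 0 < n) {δ : ℝ} (hδ : 0 < δ) :
    ∑ f with n * δ ≤ |∑ k, logRatio r g (f k) - n * relEnt r g|, tensPow r n f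
      ≤ relEntVar r g / (n * δ ^ 2) := by
  have hY : ∑ i, r i * (logRatio r g i - relEnt r g) = 0 := by
    simp only [mul_sub, sum_sub_distrib, ← sum_mul, hr.2, one_mul]
    exact sub_eq_zero.2 rfl
  have hsum : ∀ f : Fin n → Fin d,
      ∑ k, (logRatio r g (f k) - relEnt r g) = ∑ k, logRatio r g (f k) - n * relEnt r g := by
    simp [sum_sub_distrib]
  have := sum_tensPow_filter_le_abs_le (n := n) hr hY (by positivity : 0 < (n : ℝ) * δ)
  simp_rw [hsum] at this
  convert this using 1
  rw [relEntVar]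
  field_simp

lemma sum_tensPow_filter_lt_le (hr : IsProbVec r) (hg : ∀ i, 0 < g i) (hn : 0 < n) {δ : ℝ}
    (hδ : 0 < δ) :
    ∑ f with tensPow r n f < exp (n * (relEnt r g - δ)) * tensPow g n f, tensPow r n f
      ≤ relEntVar r g / (n * δ ^ 2) := by
  refine le_trans ?_ (sum_tensPow_atypical_le hr hn hδ)
  rw [← sum_filter_ne_zero]
  refine sum_le_sum_of_subset_of_nonneg (fun f hf => ?_) fun f _ _ => tensPow_nonneg hr.1 f
  simp only [mem_filter, mem_univ, true_and] at hf ⊢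
  have hP := (tensPow_nonneg hr.1 f).lt_of_ne' hf.2
  have hlog := log_lt_log hP hf.1
  rw [log_mul (exp_pos _).ne' (tensPow_pos hg f).ne', log_exp,
    ← sub_lt_iff_lt_add, log_tensPow_sub_log_tensPow hg hf.2] at hlog
  exact le_abs.2 (Or.inr (by linarith))

lemma sum_tensPow_filter_gt_le (hr : IsProbVec r) (hg : ∀ i, 0 < g i) (hn : 0 < n) {δ : ℝ}
    (hδ : 0 < δ) :
    ∑ f with exp (n * (relEnt r g + δ)) * tensPow g n f < tensPow r n f, tensPow r n f
      ≤ relEntVar r g / (n * δ ^ 2) := by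
  refine le_trans ?_ (sum_tensPow_atypical_le hr hn hδ)
  refine sum_le_sum_of_subset_of_nonneg (fun f hf => ?_) fun f _ _ => tensPow_nonneg hr.1 f
  simp only [mem_filter, mem_univ, true_and] at hf ⊢
  have hG := tensPow_pos hg (n := n) f
  have hlog := log_lt_log (by positivity) hf
  rw [log_mul (exp_pos _).ne' hG.ne', log_exp, ← lt_sub_iff_add_lt,
    log_tensPow_sub_log_tensPow hg ((by positivity : (0 : ℝ) < _).trans hf).ne'] at hlog
  exact le_abs.2 (Or.inl (by linarith))

lemma one_div_mul_DH_tensPow_mem_Icc (hr : IsProbVec r) (hg : ∀ i, 0 < g i) (hn : 0 < n)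
    {δ ε : ℝ} (hδ : 0 < δ) (hε : relEntVar r g / (n * δ ^ 2) ≤ ε)
    (hε' : relEntVar r g / (n * δ ^ 2) < 1 - ε) :
    1 / (n : ℝ) * DH ε (tensPow r n) (tensPow g n) ∈ Set.Icc (relEnt r g - δ)
      (relEnt r g + δ - log (1 - ε - relEntVar r g / (n * δ ^ 2)) / n) := by
  have hn' : (0 : ℝ) < n := Nat.cast_pos.2 hn
  obtain ⟨hlow, hhigh⟩ := DH_mem_Icc (isProbVec_tensPow hr) (fun f => (tensPow_pos hg f).le)
    ((div_nonneg (relEntVar_nonneg hr) (by positivity)).trans hε) hε'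
    ((sum_tensPow_filter_lt_le hr hg hn hδ).trans hε) (sum_tensPow_filter_gt_le hr hg hn hδ)
  rw [one_div, Set.mem_Icc, le_inv_mul_iff₀ hn', inv_mul_le_iff₀ hn',
    mul_sub _ (_ + _), mul_div_cancel₀ _ hn'.ne']
  exact ⟨hlow, hhigh⟩

end LogRatio

theorem DH_aep_general {d : ℕ} (r g : Fin d → ℝ)
    (hr : IsProbVec r) (hgpos : ∀ i, 0 < g i) :
    ∀ ε ∈ Set.Ioo (0 : ℝ) 1,
      Tendsto (fun n : ℕ => (1 / (n : ℝ)) * DH ε (tensPow r n) (tensPow g n)) atTop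
        (nhds (relEnt r g)) := by
  rintro ε ⟨hε0, hε1⟩
  refine Metric.tendsto_nhds.2 fun η hη => ?_
  set δ := η / 2
  set c : ℕ → ℝ := fun n => relEntVar r g / (n * δ ^ 2)
  have hc : Tendsto c atTop (nhds 0) := tendsto_const_nhds.div_atTop
    (tendsto_natCast_atTop_atTop.atTop_mul_const (by positivity))
  have hlog : Tendsto (fun n : ℕ => log (1 - ε - c n) / n) atTop (nhds 0) :=
    ((hc.const_sub _).log (by rw [sub_zero]; exact (sub_pos.2 hε1).ne')).div_atTop
      tendsto_natCast_atTop_atTop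
  filter_upwards [eventually_gt_atTop 0, hc.eventually (ge_mem_nhds hε0),
    hc.eventually (gt_mem_nhds (sub_pos.2 hε1)),
    hlog.eventually (lt_mem_nhds (neg_lt_zero.2 (half_pos hη)))] with n hn hcε hc1 hlogn
  obtain ⟨hlow, hhigh⟩ := one_div_mul_DH_tensPow_mem_Icc hr hgpos hn (half_pos hη) hcε hc1
  rw [Real.dist_eq, abs_lt]
  constructor <;> linarith

/-- asymptotic equipartition for the hypothesis-testing relative entropy. -/
theorem DH_aep {d : ℕ} (r g : Fin d → ℝ)
    (hr : IsProbVec r) (hg : IsProbVec g) (hgpos : ∀ i, 0 < g i) :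
    ∀ ε ∈ Set.Ioo (0 : ℝ) 1,
      Tendsto (fun n : ℕ => (1 / (n : ℝ)) * DH ε (tensPow r n) (tensPow g n)) atTop
        (nhds (relEnt r g)) :=
  DH_aep_general r g hr hgpos
end

section
/- (One-shot work yield) Fix an inverse temperature β > 0, a strictly positive probability vector g on Fin d, a probability vector r on Fin d, and ε ∈ [0,1). Then the optimal ε-extractable work equals the hypothesis-testing relative entropy: W_gain^ε(r) = (1/β) · D_H^ε(r ‖ g). -/
open Finset Real Filter

/-!
An extraction map `M` pulls the battery projector `1 ⊗ δ_W` back to a test; restricted to the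
ground battery level, it accepts `r` with the probability of reaching the excited battery, while
the fixed point `M (g ⊗ γ_W) = g ⊗ γ_W` bounds its acceptance of `g` by `e^{-βW}`. Conversely, a
test `Q` becomes the measure-and-prepare map sending accepted inputs to `g ⊗ δ_W` and rejected
ones to `g ⊗ δ_0`. So `W ≥ 0` is `ε`-extractable exactly when `b_ε(r‖g) ≤ e^{-βW}` (the infimum
defining `b_ε` being attained), and the extractable works form `[0, D_H^ε(r‖g) / β]`.
-/

open Matrix

lemma tens_eq_groundBit_add_excitedBit {ι : Type*} (v : ι → ℝ) (b : Fin 2 → ℝ) :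
    tens v b = b 0 • tens v groundBit + b 1 • tens v excitedBit := by
  funext ⟨i, k⟩
  fin_cases k <;> simp [tens, groundBit, excitedBit, mul_comm]

section Vectors

variable {ι κ : Type*} [Fintype ι] [Fintype κ]

lemma IsProbVec.tens {r : ι → ℝ} {s : κ → ℝ} (hr : IsProbVec r) (hs : IsProbVec s) :
    IsProbVec (tens r s) :=
  ⟨fun p => mul_nonneg (hr.1 p.1) (hs.1 p.2), by
    show ∑ p : ι × κ, r p.1 * s p.2 = 1
    rw [Fintype.sum_prod_type, ← Finset.sum_mul_sum, hr.2, hs.2, one_mul]⟩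

lemma IsProbVec.mulVec {M : Matrix κ ι ℝ} {v : ι → ℝ} (hM : ColStochastic M) (hv : IsProbVec v) :
    IsProbVec (M *ᵥ v) := by
  refine ⟨fun p => Finset.sum_nonneg fun q _ => mul_nonneg (hM.1 p q) (hv.1 q), ?_⟩
  simp only [Matrix.mulVec, dotProduct]
  rw [Finset.sum_comm]
  simp only [← Finset.sum_mul, hM.2, one_mul, hv.2]

lemma ColStochastic.vecMul_mem_Icc {M : Matrix κ ι ℝ} (hM : ColStochastic M) {f : κ → ℝ}
    (hf : ∀ p, 0 ≤ f p ∧ f p ≤ 1) (q : ι) : 0 ≤ (f ᵥ* M) q ∧ (f ᵥ* M) q ≤ 1 := by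
  refine ⟨Finset.sum_nonneg fun p _ => mul_nonneg (hf p).1 (hM.1 p q), ?_⟩
  calc (f ᵥ* M) q = ∑ p, f p * M p q := rfl
    _ ≤ ∑ p, M p q := Finset.sum_le_sum fun p _ => mul_le_of_le_one_left (hM.1 p q) (hf p).2
    _ = 1 := hM.2 q

end Vectors

section Battery

variable {ι : Type*} [Fintype ι]

lemma isProbVec_groundBit : IsProbVec groundBit :=
  ⟨fun k => by unfold groundBit; split <;> norm_num, by simp [groundBit]⟩

lemma isProbVec_excitedBit : IsProbVec excitedBit :=
  ⟨fun k => by unfold excitedBit; split <;> norm_num, by simp [excitedBit]⟩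

lemma isProbVec_gibbsBit (β W : ℝ) : IsProbVec (gibbsBit β W) := by
  have hE := Real.exp_pos (-β * W)
  refine ⟨fun k => by unfold gibbsBit; split <;> positivity, ?_⟩
  simp only [gibbsBit, Fin.sum_univ_two]
  field_simp
  simp

lemma gibbsBit_one (β W : ℝ) : gibbsBit β W 1 = Real.exp (-β * W) * gibbsBit β W 0 := by
  simp [gibbsBit, mul_comm]

lemma gibbsBit_zero_pos (β W : ℝ) : 0 < gibbsBit β W 0 := by
  simp only [gibbsBit]; positivity

lemma dotProduct_tens (T : ι × Fin 2 → ℝ) (v : ι → ℝ) (b : Fin 2 → ℝ) :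
    T ⬝ᵥ tens v b = b 0 * ∑ i, T (i, 0) * v i + b 1 * ∑ i, T (i, 1) * v i := by
  simp only [dotProduct, Fintype.sum_prod_type, Fin.sum_univ_two, tens, Finset.sum_add_distrib,
    Finset.mul_sum]
  congr 1 <;> exact Finset.sum_congr rfl fun i _ => by ring

lemma tens_one_excitedBit_dotProduct (w : ι × Fin 2 → ℝ) :
    tens 1 excitedBit ⬝ᵥ w = ∑ i, w (i, 1) := by
  simp [dotProduct, Fintype.sum_prod_type, Fin.sum_univ_two, tens, excitedBit]

lemma half_sum_abs_marginal_sub_excitedBit {w : ι × Fin 2 → ℝ} (hw : IsProbVec w) :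
    (1 / 2) * ∑ k, |(∑ i, w (i, k)) - excitedBit k| = 1 - tens 1 excitedBit ⬝ᵥ w := by
  have hsum : ∑ i, w (i, 0) + ∑ i, w (i, 1) = 1 := by
    rw [← hw.2, Fintype.sum_prod_type, ← Finset.sum_add_distrib]
    simp [Fin.sum_univ_two]
  have hnonneg : 0 ≤ ∑ i, w (i, 0) := Finset.sum_nonneg fun i _ => hw.1 _
  rw [tens_one_excitedBit_dotProduct, Fin.sum_univ_two]
  simp only [excitedBit]
  norm_num
  rw [abs_of_nonneg hnonneg, abs_of_nonpos (by linarith)]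
  linarith

end Battery

section MeasurePrepare

variable {ι κ : Type*} [Fintype ι]

def measurePrepare (A : ι → ℝ) (ρ₀ ρ₁ : κ → ℝ) : Matrix κ ι ℝ :=
  Matrix.of fun p q => (1 - A q) * ρ₀ p + A q * ρ₁ p

lemma measurePrepare_colStochastic [Fintype κ] {A : ι → ℝ} (hA : ∀ q, 0 ≤ A q ∧ A q ≤ 1)
    {ρ₀ ρ₁ : κ → ℝ} (h₀ : IsProbVec ρ₀) (h₁ : IsProbVec ρ₁) :
    ColStochastic (measurePrepare A ρ₀ ρ₁) := by
  refine ⟨fun p q => ?_, fun q => ?_⟩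
  · have := hA q
    have := h₀.1 p
    have := h₁.1 p
    simp only [measurePrepare, Matrix.of_apply]
    nlinarith
  · simp only [measurePrepare, Matrix.of_apply, Finset.sum_add_distrib, ← Finset.mul_sum, h₀.2,
      h₁.2]
    ring

lemma measurePrepare_mulVec (A : ι → ℝ) (ρ₀ ρ₁ : κ → ℝ) (v : ι → ℝ) :
    measurePrepare A ρ₀ ρ₁ *ᵥ v = (∑ q, v q - A ⬝ᵥ v) • ρ₀ + (A ⬝ᵥ v) • ρ₁ := by
  funext p
  simp only [measurePrepare, Matrix.mulVec, dotProduct, Matrix.of_apply, Pi.add_apply,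
    Pi.smul_apply, smul_eq_mul]
  rw [← Finset.sum_sub_distrib, Finset.sum_mul, Finset.sum_mul, ← Finset.sum_add_distrib]
  exact Finset.sum_congr rfl fun q _ => by ring

end MeasurePrepare

section Extraction

variable {ι : Type*} [Fintype ι] {β : ℝ} {g r : ι → ℝ} {ε W : ℝ}

lemma ExtractableWork.exists_test (hg : IsProbVec g) (hr : IsProbVec r)
    (h : ExtractableWork β g r ε W) :
    ∃ Q : ι → ℝ, (∀ i, 0 ≤ Q i ∧ Q i ≤ 1) ∧ 1 - ε ≤ ∑ i, Q i * r i ∧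
      ∑ i, Q i * g i ≤ Real.exp (-β * W) := by
  obtain ⟨-, M, hM, hfix, herr⟩ := h
  set T := tens 1 excitedBit ᵥ* M
  have hT : ∀ q, 0 ≤ T q ∧ T q ≤ 1 :=
    hM.vecMul_mem_Icc fun p => by simp only [tens, excitedBit]; split <;> norm_num
  refine ⟨fun i => T (i, 0), fun i => hT _, ?_, ?_⟩
  · rw [half_sum_abs_marginal_sub_excitedBit ((hr.tens isProbVec_groundBit).mulVec hM),
      dotProduct_mulVec, dotProduct_tens] at herr
    simp only [groundBit] at herr
    norm_num at herr
    linarith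
  · have hγ : T ⬝ᵥ tens g (gibbsBit β W) = gibbsBit β W 1 := by
      rw [← dotProduct_mulVec, hfix, tens_one_excitedBit_dotProduct]
      simp [tens, ← Finset.sum_mul, hg.2]
    rw [dotProduct_tens, gibbsBit_one] at hγ
    have hT₁ : 0 ≤ ∑ i, T (i, 1) * g i := Finset.sum_nonneg fun i _ => mul_nonneg (hT _).1 (hg.1 i)
    have hγ₀ := gibbsBit_zero_pos β W
    refine le_of_mul_le_mul_left ?_ hγ₀
    nlinarith [mul_nonneg (mul_nonneg (Real.exp_pos (-β * W)).le hγ₀.le) hT₁]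

lemma extractableWork_of_test (hg : IsProbVec g) (hr : IsProbVec r) (hW : 0 ≤ W) {Q : ι → ℝ}
    (hQ : ∀ i, 0 ≤ Q i ∧ Q i ≤ 1) (hQr : 1 - ε ≤ ∑ i, Q i * r i)
    (hQg : ∑ i, Q i * g i ≤ Real.exp (-β * W)) : ExtractableWork β g r ε W := by
  set E := Real.exp (-β * W)
  set c := ∑ i, Q i * g i
  have hE : 0 < E := Real.exp_pos _
  have hc : 0 ≤ c := Finset.sum_nonneg fun i _ => mul_nonneg (hQ i).1 (hg.1 i)
  -- on the excited battery level `A` accepts with probability `1 - c / E`, so that the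
  -- acceptance probability of `g ⊗ γ_W` is `γ_W 1` and `M` fixes `g ⊗ γ_W`
  set A : ι × Fin 2 → ℝ := fun p => if p.2 = 0 then Q p.1 else 1 - c / E
  have hA : ∀ p, 0 ≤ A p ∧ A p ≤ 1 := by
    rintro ⟨i, k⟩
    have := div_le_one_of_le₀ hQg hE.le
    have := div_nonneg hc hE.le
    simp only [A]
    split
    · exact hQ i
    · constructor <;> linarith
  set M := measurePrepare A (tens g groundBit) (tens g excitedBit)
  have hM : ColStochastic M := measurePrepare_colStochastic hA
    (hg.tens isProbVec_groundBit) (hg.tens isProbVec_excitedBit)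
  refine ⟨hW, M, hM, ?_, ?_⟩
  · have hAγ : A ⬝ᵥ tens g (gibbsBit β W) = gibbsBit β W 1 := by
      have hA₀ : ∀ i, A (i, 0) = Q i := fun i => if_pos rfl
      have hA₁ : ∀ i, A (i, 1) = 1 - c / E := fun i => if_neg one_ne_zero
      rw [dotProduct_tens, gibbsBit_one]
      simp only [hA₀, hA₁, ← Finset.mul_sum, hg.2]
      change gibbsBit β W 0 * c + E * gibbsBit β W 0 * ((1 - c / E) * 1) = E * gibbsBit β W 0
      field_simp
      ring
    have hγ : gibbsBit β W 0 = 1 - gibbsBit β W 1 := by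
      have := (isProbVec_gibbsBit β W).2
      rw [Fin.sum_univ_two] at this
      linarith
    rw [measurePrepare_mulVec, hAγ, (hg.tens (isProbVec_gibbsBit β W)).2,
      tens_eq_groundBit_add_excitedBit g (gibbsBit β W), hγ]
  · rw [half_sum_abs_marginal_sub_excitedBit ((hr.tens isProbVec_groundBit).mulVec hM),
      measurePrepare_mulVec, dotProduct_tens]
    simp only [tens, groundBit, excitedBit, A, Fin.isValue, mul_ite, mul_one, mul_zero,
      ↓reduceIte, one_mul, one_ne_zero, zero_mul, add_zero, dotProduct_add, dotProduct_smul,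
      tens_one_excitedBit_dotProduct, Finset.sum_const_zero, smul_eq_mul, hg.2, zero_add]
    linarith

end Extraction

section HypothesisTesting

variable {ι : Type*} [Fintype ι] {ε : ℝ} {r g : ι → ℝ}

/-- The infimum is attained because the feasible tests form a compact set. -/
lemma exists_test_eq_bEps (hfeas : 1 - ε ≤ ∑ i, r i) :
    ∃ Q : ι → ℝ, (∀ i, 0 ≤ Q i ∧ Q i ≤ 1) ∧ 1 - ε ≤ ∑ i, Q i * r i ∧
      bEps ε r g = ∑ i, Q i * g i := by
  set K : Set (ι → ℝ) := Set.Icc 0 1 ∩ {Q | 1 - ε ≤ ∑ i, Q i * r i}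
  have hK : IsCompact K := isCompact_Icc.inter_right (isClosed_le continuous_const (by fun_prop))
  have hK_ne : K.Nonempty := ⟨1, ⟨⟨zero_le_one, le_rfl⟩, by simpa using hfeas⟩⟩
  have hvalues : {y | ∃ Q : ι → ℝ, (∀ i, 0 ≤ Q i ∧ Q i ≤ 1) ∧ 1 - ε ≤ ∑ i, Q i * r i ∧
      y = ∑ i, Q i * g i} = (fun Q => ∑ i, Q i * g i) '' K := by
    ext y
    simp [K, Pi.le_def, forall_and, eq_comm, and_assoc]
  obtain ⟨Q, ⟨hQ, hQr⟩, hQg⟩ :=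
    (hK.image (by fun_prop : Continuous fun Q : ι → ℝ => ∑ i, Q i * g i)).sInf_mem
      (hK_ne.image _)
  refine ⟨Q, fun i => ⟨hQ.1 i, hQ.2 i⟩, hQr, ?_⟩
  rw [bEps, hvalues, ← hQg]

lemma bEps_le_iff (hg : ∀ i, 0 ≤ g i) (hfeas : 1 - ε ≤ ∑ i, r i) {x : ℝ} :
    bEps ε r g ≤ x ↔ ∃ Q : ι → ℝ, (∀ i, 0 ≤ Q i ∧ Q i ≤ 1) ∧ 1 - ε ≤ ∑ i, Q i * r i ∧
      ∑ i, Q i * g i ≤ x := by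
  constructor
  · intro h
    obtain ⟨Q, hQ, hQr, hQg⟩ := exists_test_eq_bEps (g := g) hfeas
    exact ⟨Q, hQ, hQr, hQg ▸ h⟩
  · rintro ⟨Q, hQ, hQr, hQx⟩
    have hbdd : BddBelow {y | ∃ Q : ι → ℝ, (∀ i, 0 ≤ Q i ∧ Q i ≤ 1) ∧
        1 - ε ≤ ∑ i, Q i * r i ∧ y = ∑ i, Q i * g i} := by
      refine ⟨0, ?_⟩
      rintro _ ⟨Q, hQ, -, rfl⟩
      exact Finset.sum_nonneg fun i _ => mul_nonneg (hQ i).1 (hg i)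
    exact (csInf_le hbdd ⟨Q, hQ, hQr, rfl⟩).trans hQx

lemma bEps_pos (hg : ∀ i, 0 < g i) (hfeas : 1 - ε ≤ ∑ i, r i) (hε : ε < 1) :
    0 < bEps ε r g := by
  by_contra! h
  obtain ⟨Q, hQ, hQr, hQg⟩ := (bEps_le_iff (fun i => (hg i).le) hfeas).1 h
  have hQg_zero : ∀ i ∈ Finset.univ, Q i * g i = 0 :=
    (Finset.sum_eq_zero_iff_of_nonneg fun i _ => mul_nonneg (hQ i).1 (hg i).le).1
      (hQg.antisymm (Finset.sum_nonneg fun i _ => mul_nonneg (hQ i).1 (hg i).le))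
  have hQ_zero : ∀ i, Q i = 0 := fun i =>
    (mul_eq_zero.1 (hQg_zero i (Finset.mem_univ i))).resolve_right (hg i).ne'
  simp only [hQ_zero, zero_mul, Finset.sum_const_zero] at hQr
  linarith

lemma bEps_le_one (hg : IsProbVec g) (hfeas : 1 - ε ≤ ∑ i, r i) : bEps ε r g ≤ 1 :=
  (bEps_le_iff hg.1 hfeas).2 ⟨1, fun _ => ⟨zero_le_one, le_rfl⟩, by simpa using hfeas,
    by simp [hg.2]⟩

lemma le_inv_mul_DH_iff {β W : ℝ} (hβ : 0 < β) (hb : 0 < bEps ε r g) :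
    W ≤ 1 / β * DH ε r g ↔ bEps ε r g ≤ Real.exp (-β * W) := by
  rw [DH, ← Real.log_le_iff_le_exp hb, one_div_mul_eq_div, le_div_iff₀ hβ]
  constructor <;> intro h <;> linarith

end HypothesisTesting

lemma extractableWork_iff {ι : Type*} [Fintype ι] {β ε W : ℝ} {g r : ι → ℝ} (hg : IsProbVec g)
    (hr : IsProbVec r) (hfeas : 1 - ε ≤ ∑ i, r i) :
    ExtractableWork β g r ε W ↔ 0 ≤ W ∧ bEps ε r g ≤ Real.exp (-β * W) := by
  rw [bEps_le_iff hg.1 hfeas]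
  constructor
  · exact fun h => ⟨h.1, h.exists_test hg hr⟩
  · rintro ⟨hW, Q, hQ, hQr, hQg⟩
    exact extractableWork_of_test hg hr hW hQ hQr hQg

/-- the one-shot ε-work yield equals the hypothesis-testing relative entropy
(divided by the inverse temperature). -/
theorem one_shot_work_yield {d : ℕ} (β : ℝ) (hβ : 0 < β)
    (g : Fin d → ℝ) (hg : IsProbVec g) (hgpos : ∀ i, 0 < g i)
    (r : Fin d → ℝ) (hr : IsProbVec r)
    (ε : ℝ) (hε : ε ∈ Set.Ico (0 : ℝ) 1) :
    Wgain β g r ε = (1 / β) * DH ε r g := by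
  have hfeas : 1 - ε ≤ ∑ i, r i := by rw [hr.2]; linarith [hε.1]
  have hb : 0 < bEps ε r g := bEps_pos hgpos hfeas hε.2
  have hextractable : {W | ExtractableWork β g r ε W} = Set.Icc 0 ((1 / β) * DH ε r g) := by
    ext W
    rw [Set.mem_ofPred_eq, extractableWork_iff hg hr hfeas, Set.mem_Icc, le_inv_mul_DH_iff hβ hb]
  have hDH : 0 ≤ DH ε r g := neg_nonneg.2 (Real.log_nonpos hb.le (bEps_le_one hg hfeas))
  rw [Wgain, hextractable, csSup_Icc (mul_nonneg (by positivity) hDH)]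
end

section
/- (One-shot work cost) Fix an inverse temperature β > 0, a strictly positive probability vector g on Fin d, a probability vector r on Fin d, and ε ∈ (0,1). Then the one-shot work cost satisfies, for every δ ∈ (0, 1−ε]: (1/β) · (D_H^{1−ε−δ}(r ‖ g) − log(1/δ)) ≤ W_cost^ε(r), and moreover W_cost^ε(r) ≤ (1/β) · (D_H^{1−ε}(r ‖ g) − log((1−ε)/ε)). -/
open Finset Real Filter

/-!
Both bounds come from the optimal test between `r` and `g`.

Lower bound: pulling a test `Q ⊗ δ₀` on the output back through a Gibbs-preserving `M` gives a
nonnegative test on the input. Since `γ_W ≥ e^{-βW}/(1+e^{-βW}) • δ_W`, its value on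
`g ⊗ γ_W`, namely `(∑ Q g)/(1+e^{-βW})`, is at least `e^{-βW}/(1+e^{-βW})` times its value on
`g ⊗ δ_W`, namely `∑ Q r̃`; and `∑ Q r̃ ≥ δ` whenever `Q` has power `ε + δ` on `r`, because
`r̃` is `ε`-close to `r`. Hence `b_{1-ε-δ}(r‖g) ≥ δ e^{-βW}`.

Upper bound: put `c = ε / ((1-ε) b)` with `b = b_{1-ε}(r‖g)`. If the mass `m` of `r` above
`c g` exceeded `ε`, the test `(ε/m) (r - c g)⁺ / r` would have type-II error at most
`ε / c = (1-ε) b < b`. So cutting `r` down to `c g` and spreading the removed mass over the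
slack gives `r̃ ≤ c g` that is `ε`-close to `r`, and any `r̃ ≤ e^{βW} g` is produced from
`g ⊗ δ_W` by an explicit Gibbs-preserving stochastic map, here with `e^{βW} = c`.
-/

open Matrix

section

variable {ι : Type*} [Fintype ι]

lemma bEps_le_sum {η : ℝ} {r g Q : ι → ℝ} (hg : ∀ i, 0 ≤ g i)
    (hQ : ∀ i, 0 ≤ Q i ∧ Q i ≤ 1) (hQr : 1 - η ≤ ∑ i, Q i * r i) :
    bEps η r g ≤ ∑ i, Q i * g i :=
  csInf_le
    ⟨0, by rintro _ ⟨P, hP, -, rfl⟩; exact sum_nonneg fun i _ => mul_nonneg (hP i).1 (hg i)⟩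
    ⟨Q, hQ, hQr, rfl⟩

lemma le_bEps_s9 {η t : ℝ} {r g : ι → ℝ} (hη : 0 ≤ η) (hr : ∑ i, r i = 1)
    (h : ∀ Q : ι → ℝ, (∀ i, 0 ≤ Q i ∧ Q i ≤ 1) → 1 - η ≤ ∑ i, Q i * r i →
      t ≤ ∑ i, Q i * g i) :
    t ≤ bEps η r g :=
  le_csInf ⟨_, fun _ => 1, fun _ => ⟨zero_le_one, le_rfl⟩, by simp [hr, hη], rfl⟩
    fun _ ⟨Q, hQ, hQr, hy⟩ => hy ▸ h Q hQ hQr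

lemma bEps_pos_s9 {η : ℝ} {r g : ι → ℝ} (hr : IsProbVec r) (hg : ∀ i, 0 < g i)
    (hη0 : 0 ≤ η) (hη1 : η < 1) : 0 < bEps η r g := by
  obtain ⟨i, -, -⟩ := exists_ne_zero_of_sum_ne_zero (hr.2.trans_ne one_ne_zero)
  obtain ⟨i₀, -, hi₀⟩ := exists_min_image univ g ⟨i, mem_univ i⟩
  refine (mul_pos (sub_pos.2 hη1) (hg i₀)).trans_le (le_bEps_s9 hη0 hr.2 fun Q hQ hQr => ?_)
  have hr1 : ∀ i, r i ≤ 1 := fun i => hr.2 ▸ single_le_sum (fun j _ => hr.1 j) (mem_univ i)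
  calc (1 - η) * g i₀ ≤ (∑ i, Q i * r i) * g i₀ := by gcongr; exact (hg i₀).le
    _ = ∑ i, Q i * (r i * g i₀) := by simp only [sum_mul, mul_assoc]
    _ ≤ ∑ i, Q i * g i := by
      gcongr with i
      · exact (hQ i).1
      · exact (mul_le_of_le_one_left (hg i₀).le (hr1 i)).trans (hi₀ i (mem_univ i))

lemma bEps_one_sub_le {ε : ℝ} {r g : ι → ℝ} (hr : IsProbVec r) (hg : IsProbVec g)
    (hε0 : 0 ≤ ε) (hε1 : ε ≤ 1) : bEps (1 - ε) r g ≤ ε := by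
  simpa [← mul_sum, hg.2] using
    bEps_le_sum (Q := fun _ => ε) hg.1 (fun _ => ⟨hε0, hε1⟩) (by simp [← mul_sum, hr.2])

lemma bEps_le_div_of_le_sum_posPart {ε c : ℝ} {r g : ι → ℝ} (hr : ∀ i, 0 ≤ r i)
    (hg : ∀ i, 0 ≤ g i) (hc : 0 < c) (hε : 0 < ε) (hm : ε ≤ ∑ i, (r i - c * g i)⁺) :
    bEps (1 - ε) r g ≤ ε / c := by
  set m := ∑ i, (r i - c * g i)⁺
  have hm0 : 0 < m := hε.trans_le hm
  have hle_r : ∀ i, (r i - c * g i)⁺ ≤ r i := fun i =>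
    sup_le (by linarith [mul_nonneg hc.le (hg i)]) (hr i)
  have hratio : ∀ i, 0 ≤ (r i - c * g i)⁺ / r i := fun i =>
    div_nonneg (posPart_nonneg _) (hr i)
  set Q : ι → ℝ := fun i => ε / m * ((r i - c * g i)⁺ / r i)
  have hQ : ∀ i, 0 ≤ Q i ∧ Q i ≤ 1 := fun i =>
    ⟨mul_nonneg (div_nonneg hε.le hm0.le) (hratio i),
      mul_le_one₀ ((div_le_one hm0).2 hm) (hratio i) (div_le_one_of_le₀ (hle_r i) (hr i))⟩
  have hQr : ∀ i, Q i * r i = ε / m * (r i - c * g i)⁺ := fun i => by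
    rcases (hr i).eq_or_lt with h | h
    · simp [Q, ← h, mul_nonneg hc.le (hg i)]
    · simp only [Q, mul_assoc, div_mul_cancel₀ _ h.ne']
  -- `Q` vanishes unless `c * g i < r i`
  have hQg : ∀ i, Q i * g i ≤ Q i * r i / c := fun i => by
    rcases le_or_gt (r i - c * g i) 0 with h | h
    · simp [Q, posPart_eq_zero.2 h]
    · rw [mul_div_assoc]
      exact mul_le_mul_of_nonneg_left ((le_div_iff₀' hc).2 (by linarith)) (hQ i).1
  have hQr_sum : ∑ i, Q i * r i = ε := by
    rw [sum_congr rfl fun i _ => hQr i, ← mul_sum, div_mul_cancel₀ _ hm0.ne']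
  calc bEps (1 - ε) r g ≤ ∑ i, Q i * g i := bEps_le_sum hg hQ (by linarith)
    _ ≤ ∑ i, Q i * r i / c := sum_le_sum fun i _ => hQg i
    _ = ε / c := by rw [← sum_div, hQr_sum]

lemma sum_posPart_sub_le {ε : ℝ} {r g : ι → ℝ} (hr : IsProbVec r) (hg : ∀ i, 0 < g i)
    (hε0 : 0 < ε) (hε1 : ε < 1) :
    ∑ i, (r i - ε / ((1 - ε) * bEps (1 - ε) r g) * g i)⁺ ≤ ε := by
  have hb := bEps_pos_s9 hr hg (sub_nonneg.2 hε1.le) (sub_lt_self 1 hε0)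
  by_contra! h
  have := bEps_le_div_of_le_sum_posPart hr.1 (fun i => (hg i).le)
    (by have := sub_pos.2 hε1; positivity) hε0 h.le
  rw [div_div_cancel₀ hε0.ne'] at this
  nlinarith

lemma exists_probVec_le_mul_close {c : ℝ} {r g : ι → ℝ} (hr : IsProbVec r) (hg : IsProbVec g)
    (hc : 1 < c) :
    ∃ rt : ι → ℝ, IsProbVec rt ∧ (∀ i, rt i ≤ c * g i) ∧
      (1 / 2) * ∑ i, |rt i - r i| ≤ ∑ i, (r i - c * g i)⁺ := by
  set x : ι → ℝ := fun i => r i - c * g i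
  set m := ∑ i, (x i)⁺
  have hm0 : 0 ≤ m := sum_nonneg fun i _ => posPart_nonneg _
  have hR : ∑ i, (x i)⁻ = c - 1 + m := by
    have hx : ∑ i, x i = 1 - c := by simp [x, sum_sub_distrib, ← mul_sum, hr.2, hg.2]
    rw [sum_congr rfl fun i _ => (posPart_sub_negPart (x i)).symm, sum_sub_distrib] at hx
    linarith
  have hR0 : 0 < c - 1 + m := by linarith
  have hmR : m / (c - 1 + m) ≤ 1 := (div_le_one hR0).2 (by linarith)
  have hspread : ∀ i, 0 ≤ m / (c - 1 + m) * (x i)⁻ := fun i =>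
    mul_nonneg (div_nonneg hm0 hR0.le) (negPart_nonneg _)
  -- cut `r` down to `c * g` and spread the removed mass `m` over the slack `(c * g - r)⁺`
  refine ⟨fun i => r i - (x i)⁺ + m / (c - 1 + m) * (x i)⁻, ⟨fun i => ?_, ?_⟩, fun i => ?_, ?_⟩
  · have : (x i)⁺ ≤ r i :=
      sup_le (by linarith [mul_nonneg (by linarith : 0 ≤ c) (hg.1 i)]) (hr.1 i)
    linarith [hspread i]
  · rw [sum_add_distrib, sum_sub_distrib, ← mul_sum, hR, hr.2, div_mul_cancel₀ _ hR0.ne']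
    ring
  · linarith [mul_le_of_le_one_left (negPart_nonneg (x i)) hmR, posPart_sub_negPart (x i)]
  · have hpt : ∀ i, |r i - (x i)⁺ + m / (c - 1 + m) * (x i)⁻ - r i|
        ≤ m / (c - 1 + m) * (x i)⁻ + (x i)⁺ := fun i => by
      rw [abs_le]
      constructor <;> linarith [hspread i, posPart_nonneg (x i)]
    have := sum_le_sum fun i (_ : i ∈ univ) => hpt i
    rw [sum_add_distrib, ← mul_sum, hR, div_mul_cancel₀ _ hR0.ne'] at this
    linarith

lemma sum_mul_le_sum_mul_add_half_sum_abs {p q Q : ι → ℝ} (hQ : ∀ i, 0 ≤ Q i ∧ Q i ≤ 1)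
    (hpq : ∑ i, p i = ∑ i, q i) :
    ∑ i, Q i * p i ≤ ∑ i, Q i * q i + (1 / 2) * ∑ i, |q i - p i| := by
  have hpt : ∀ i, Q i * p i ≤ Q i * q i + ((p i - q i) + |q i - p i|) / 2 := fun i => by
    rcases abs_cases (q i - p i) with ⟨h, hs⟩ | ⟨h, hs⟩ <;> rw [h] <;> nlinarith [hQ i]
  have := sum_le_sum fun i (_ : i ∈ univ) => hpt i
  rw [sum_add_distrib, ← sum_div, sum_add_distrib, sum_sub_distrib, hpq] at this
  linarith

lemma tens_dotProduct_tens {κ : Type*} [Fintype κ] (a c : ι → ℝ) (b e : κ → ℝ) :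
    tens a b ⬝ᵥ tens c e = (a ⬝ᵥ c) * (b ⬝ᵥ e) := by
  simp only [dotProduct, tens, Fintype.sum_prod_type, sum_mul_sum]
  exact sum_congr rfl fun _ _ => sum_congr rfl fun _ _ => by ring

lemma mul_exp_le_bEps_of_formationWork {β ε δ W : ℝ} {g r : ι → ℝ} (hr : IsProbVec r)
    (hg : ∀ i, 0 ≤ g i) (hεδ : ε + δ ≤ 1) (hW : FormationWork β g r ε W) :
    δ * exp (-β * W) ≤ bEps (1 - ε - δ) r g := by
  obtain ⟨-, M, rt, hM, hfix, hrt, hclose, hmap⟩ := hW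
  set E := exp (-β * W)
  refine le_bEps_s9 (by linarith) hr.2 fun Q hQ hQr => ?_
  have hpower : δ ≤ Q ⬝ᵥ rt := by
    have := sum_mul_le_sum_mul_add_half_sum_abs hQ (hr.2.trans hrt.2.symm)
    simp only [dotProduct]
    linarith
  -- pull the test `Q ⊗ δ₀` back through `M`
  set v := tens Q groundBit
  have hv : 0 ≤ v := fun p => mul_nonneg (hQ p.1).1 (by unfold groundBit; split_ifs <;> norm_num)
  have hvM : 0 ≤ v ᵥ* M := fun q => dotProduct_nonneg_of_nonneg hv fun p => hM.1 p q
  have hγ : (E / (1 + E)) • tens g excitedBit ≤ tens g (gibbsBit β W) := fun ⟨i, k⟩ => by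
    fin_cases k <;> simp [tens, excitedBit, gibbsBit, E]
    · exact mul_nonneg (hg i) (by positivity)
    · exact le_of_eq (by ring)
  have hpull : E / (1 + E) * (Q ⬝ᵥ rt) ≤ (Q ⬝ᵥ g) / (1 + E) :=
    calc E / (1 + E) * (Q ⬝ᵥ rt) = v ⬝ᵥ (M *ᵥ ((E / (1 + E)) • tens g excitedBit)) := by
          rw [mulVec_smul, hmap, dotProduct_smul, tens_dotProduct_tens]
          simp [groundBit, dotProduct]
      _ = (v ᵥ* M) ⬝ᵥ ((E / (1 + E)) • tens g excitedBit) := dotProduct_mulVec _ _ _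
      _ ≤ (v ᵥ* M) ⬝ᵥ tens g (gibbsBit β W) :=
          dotProduct_le_dotProduct_of_nonneg_left hγ hvM
      _ = v ⬝ᵥ tens g (gibbsBit β W) := by rw [← dotProduct_mulVec, hfix]
      _ = (Q ⬝ᵥ g) / (1 + E) := by
          rw [tens_dotProduct_tens]
          simp [groundBit, gibbsBit, dotProduct, Fin.sum_univ_two, E, div_eq_mul_inv]
  rw [div_mul_eq_mul_div, div_le_div_iff_of_pos_right (by positivity)] at hpull
  calc δ * E ≤ E * (Q ⬝ᵥ rt) := by rw [mul_comm]; gcongr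
    _ ≤ Q ⬝ᵥ g := hpull

variable [DecidableEq ι]

/-- From `(j, excited)` the battery relaxes and the system is prepared in `rt`; from
`(j, ground)` the battery is excited with probability `x j`, the system then being replaced by
`g`. -/
noncomputable def formationMatrix (x g rt : ι → ℝ) : Matrix (ι × Fin 2) (ι × Fin 2) ℝ :=
  fun p q =>
    if q.2 = 0 then
      if p.2 = 0 then (if p.1 = q.1 then 1 - x q.1 else 0) else x q.1 * g p.1
    else if p.2 = 0 then rt p.1 else 0

lemma colStochastic_formationMatrix {x g rt : ι → ℝ} (hx : ∀ i, 0 ≤ x i ∧ x i ≤ 1)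
    (hg : IsProbVec g) (hrt : IsProbVec rt) : ColStochastic (formationMatrix x g rt) := by
  refine ⟨fun ⟨i, k⟩ ⟨j, l⟩ => ?_, fun ⟨j, l⟩ => ?_⟩
  · simp only [formationMatrix]
    split_ifs <;> first | linarith [hx j] | exact mul_nonneg (hx j).1 (hg.1 i) | exact hrt.1 i
  · fin_cases l <;> simp [formationMatrix, Fintype.sum_prod_type, Fin.sum_univ_two,
      sum_add_distrib, ← mul_sum, hg.2, hrt.2]

lemma formationMatrix_mulVec_excited {x g rt : ι → ℝ} (hg : IsProbVec g) :
    formationMatrix x g rt *ᵥ tens g excitedBit = tens rt groundBit := by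
  ext ⟨i, k⟩
  fin_cases k <;> simp [formationMatrix, mulVec, dotProduct, tens, excitedBit, groundBit,
    Fintype.sum_prod_type, Fin.sum_univ_two, ← mul_sum, hg.2]

lemma formationMatrix_mulVec_gibbsBit {β W : ℝ} {x g rt : ι → ℝ} (hg : IsProbVec g)
    (hrt : IsProbVec rt) (hxg : ∀ i, x i * g i = exp (-β * W) * rt i) :
    formationMatrix x g rt *ᵥ tens g (gibbsBit β W) = tens g (gibbsBit β W) := by
  simp only [neg_mul] at hxg
  ext ⟨i, k⟩
  fin_cases k <;> simp [formationMatrix, mulVec, dotProduct, tens, gibbsBit,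
    Fintype.sum_prod_type, Fin.sum_univ_two, sum_add_distrib]
  · rw [← mul_sum, ← sum_mul, hg.2]
    linear_combination -(1 + exp (-(β * W)))⁻¹ * hxg i
  · calc _ = g i * (1 + exp (-(β * W)))⁻¹ * ∑ j, x j * g j := by
          rw [mul_sum]; exact sum_congr rfl fun _ _ => by ring
      _ = _ := by rw [sum_congr rfl fun j _ => hxg j, ← mul_sum, hrt.2]; ring

lemma formationWork_of_le_exp_mul {β ε W : ℝ} {g r rt : ι → ℝ} (hW : 0 ≤ W)
    (hg : IsProbVec g) (hrt : IsProbVec rt) (hle : ∀ i, rt i ≤ exp (β * W) * g i)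
    (hclose : (1 / 2) * ∑ i, |rt i - r i| ≤ ε) : FormationWork β g r ε W := by
  set x : ι → ℝ := fun i => rt i / (exp (β * W) * g i)
  have hx : ∀ i, 0 ≤ x i ∧ x i ≤ 1 := fun i =>
    ⟨div_nonneg (hrt.1 i) (mul_nonneg (exp_pos _).le (hg.1 i)),
      div_le_one_of_le₀ (hle i) (mul_nonneg (exp_pos _).le (hg.1 i))⟩
  have hxg : ∀ i, x i * g i = exp (-β * W) * rt i := fun i => by
    rcases (hg.1 i).eq_or_lt with h | h
    · simp [x, ← h, le_antisymm (by simpa [← h] using hle i) (hrt.1 i)]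
    · simp only [x, neg_mul, exp_neg]
      field_simp
  exact ⟨hW, formationMatrix x g rt, rt, colStochastic_formationMatrix hx hg hrt,
    formationMatrix_mulVec_gibbsBit hg hrt hxg, hrt, hclose, formationMatrix_mulVec_excited hg⟩

lemma formationWork_log_div {β ε : ℝ} {g r : ι → ℝ} (hβ : 0 < β)
    (hg : IsProbVec g) (hgpos : ∀ i, 0 < g i) (hr : IsProbVec r) (hε0 : 0 < ε) (hε1 : ε < 1) :
    FormationWork β g r ε (log (ε / ((1 - ε) * bEps (1 - ε) r g)) / β) := by
  set c := ε / ((1 - ε) * bEps (1 - ε) r g)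
  have hb := bEps_pos_s9 hr hgpos (sub_nonneg.2 hε1.le) (sub_lt_self 1 hε0)
  have hc : 1 < c := by
    have := sub_pos.2 hε1
    rw [lt_div_iff₀ (by positivity)]
    nlinarith [bEps_one_sub_le hr hg hε0.le hε1.le]
  obtain ⟨rt, hrt, hle, hclose⟩ := exists_probVec_le_mul_close hr hg hc
  have hexp : exp (β * (log c / β)) = c := by
    rw [mul_div_cancel₀ _ hβ.ne', exp_log (by linarith)]
  exact formationWork_of_le_exp_mul (div_nonneg (log_nonneg hc.le) hβ.le) hg hrt
    (by rwa [hexp]) (hclose.trans (sum_posPart_sub_le hr hgpos hε0 hε1))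

end

/-- one-shot bounds on the ε-work cost. -/
theorem one_shot_work_cost {d : ℕ} (β : ℝ) (hβ : 0 < β)
    (g : Fin d → ℝ) (hg : IsProbVec g) (hgpos : ∀ i, 0 < g i)
    (r : Fin d → ℝ) (hr : IsProbVec r)
    (ε : ℝ) (hε : ε ∈ Set.Ioo (0 : ℝ) 1) :
    (∀ δ ∈ Set.Ioc (0 : ℝ) (1 - ε),
      (1 / β) * (DH (1 - ε - δ) r g - Real.log (1 / δ)) ≤ Wcost β g r ε) ∧
    Wcost β g r ε ≤ (1 / β) * (DH (1 - ε) r g - Real.log ((1 - ε) / ε)) := by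
  obtain ⟨hε0, hε1⟩ := hε
  have hW₀ := formationWork_log_div hβ hg hgpos hr hε0 hε1
  constructor
  · rintro δ ⟨hδ0, hδ⟩
    refine le_csInf ⟨_, hW₀⟩ fun W hW => ?_
    have hlog := log_le_log (by positivity)
      (mul_exp_le_bEps_of_formationWork (δ := δ) hr hg.1 (by linarith) hW)
    rw [log_mul hδ0.ne' (exp_pos _).ne', log_exp] at hlog
    rw [DH, one_div_mul_eq_div, div_le_iff₀ hβ, one_div, log_inv]
    linarith
  · have hb := bEps_pos_s9 hr hgpos (sub_nonneg.2 hε1.le) (sub_lt_self 1 hε0)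
    have h1ε := sub_pos.2 hε1
    refine (csInf_le ⟨0, fun W (hW : FormationWork β g r ε W) => hW.1⟩ hW₀).trans_eq ?_
    rw [DH, log_div hε0.ne' (by positivity), log_mul h1ε.ne' hb.ne', log_div h1ε.ne' hε0.ne']
    ring
end
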